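/- arXiv:2602.11788 — 10 statements merged into one kernel-verified Lean document; each statement's English description precedes it below -/
import Mathlib

section
/- Let K be a field containing a primitive n-th root of unity ζ, and let T be a nonempty finite subset of ZMod n with f_T = ∏_{γ ∈ T} (X − ζ^{γ̃}) ∈ K[X]. Then f_T is a binomial, i.e., there exists c ∈ K with f_T = X^{|T|} − c, if and only if |T| divides n and T is an equal-difference set with common difference n/|T|, i.e., T is a coset of the additive subgroup of ZMod n generated by the image of n/|T|. -/
open Polynomial Finset

/-!
The map `γ ↦ ζ ^ γ.val` is an injective additive character `ψ` of `ZMod n`, so `f_T` has the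
`m = |T|` distinct roots `ψ '' T`. A monic polynomial of degree `m` with `m` distinct roots is
`X ^ m - c` exactly when all of them have the same `m`-th power, i.e. when `m • (γ - γ₀) = 0` for
all `γ ∈ T` and a fixed `γ₀ ∈ T`. In the cyclic group `ZMod n` the `m`-torsion has at most `m`
elements, so then `T - γ₀` is the whole `m`-torsion subgroup: Lagrange gives `m ∣ n`, and this
subgroup is generated by `n / m`.
-/

namespace Polynomial

variable {R : Type*} [CommRing R] [IsDomain R]

theorem prod_X_sub_C_eq_X_pow_sub_C_iff {S : Finset R} (hS : S.Nonempty) (c : R) :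
    ∏ r ∈ S, (X - C r) = X ^ #S - C c ↔ ∀ r ∈ S, r ^ #S = c := by
  constructor
  · intro h r hr
    have hroot := congrArg (eval r) h
    rw [eval_prod, prod_eq_zero hr (by simp)] at hroot
    simpa [sub_eq_zero, eq_comm] using hroot
  · intro h
    have hbinom : (X ^ #S - C c : R[X]).Monic := monic_X_pow_sub_C c hS.card_pos.ne'
    have hdvd : ∏ r ∈ S, (X - C r) ∣ X ^ #S - C c := by
      refine (Multiset.prod_X_sub_C_dvd_iff_le_roots hbinom.ne_zero S.val).mpr
        ((Multiset.le_iff_subset S.nodup).mpr fun r hr => ?_)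
      rw [mem_roots hbinom.ne_zero, IsRoot, eval_sub, eval_pow, eval_X, eval_C, h r hr, sub_self]
    exact (eq_of_monic_of_dvd_of_natDegree_le (monic_prod_X_sub_C _ S) hbinom hdvd
      (by rw [natDegree_X_pow_sub_C, natDegree_finsetProd_X_sub_C_eq_card])).symm

end Polynomial

theorem AddChar.pow_eq_pow_iff {A M : Type*} [AddCommGroup A] [Monoid M] {ψ : AddChar A M}
    (hψ : Function.Injective ψ) (m : ℕ) (a b : A) :
    ψ a ^ m = ψ b ^ m ↔ m • (a - b) = 0 := by
  rw [← map_nsmul_eq_pow, ← map_nsmul_eq_pow, hψ.eq_iff, nsmul_sub, sub_eq_zero]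

theorem IsAddCyclic.card_ker_nsmul_le {G : Type*} [AddCommGroup G] [Finite G] [IsAddCyclic G]
    {m : ℕ} (hm : 0 < m) : Nat.card (nsmulAddMonoidHom m : G →+ G).ker ≤ m := by
  classical
  have := Fintype.ofFinite G
  rw [Nat.card_eq_fintype_card, Fintype.card_subtype]
  simpa only [AddMonoidHom.mem_ker, nsmulAddMonoidHom_apply] using
    IsAddCyclic.card_nsmul_eq_zero_le (α := G) hm

theorem IsAddCyclic.coe_eq_add_ker_nsmul {G : Type*} [AddCommGroup G] [Finite G] [IsAddCyclic G]
    {T : Finset G} {g : G} (hg : g ∈ T) (hT : ∀ x ∈ T, #T • (x - g) = 0) :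
    (T : Set G) = (g + ·) '' (nsmulAddMonoidHom #T : G →+ G).ker := by
  refine Set.eq_of_subset_of_ncard_le (fun x hx => ⟨x - g, hT x hx, add_sub_cancel g x⟩) ?_
  rw [Set.ncard_image_of_injective _ (add_right_injective g), ← Nat.card_coe_set_eq,
    Set.ncard_coe_finset]
  exact card_ker_nsmul_le (card_pos.mpr ⟨g, hg⟩)

namespace ZMod

variable {n : ℕ} [NeZero n]

theorem ker_nsmul_eq_closure {m : ℕ} (hmn : m ∣ n) :
    (nsmulAddMonoidHom m : ZMod n →+ ZMod n).ker =
      AddSubgroup.closure {((n / m : ℕ) : ZMod n)} := by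
  have hm : 0 < m := Nat.pos_of_dvd_of_pos hmn (NeZero.pos n)
  symm
  refine AddSubgroup.eq_of_le_of_card_ge ?_ ?_
  · rw [AddSubgroup.closure_le, Set.singleton_subset_iff, SetLike.mem_coe, AddMonoidHom.mem_ker,
      nsmulAddMonoidHom_apply, nsmul_eq_mul, ← Nat.cast_mul, Nat.mul_div_cancel' hmn, natCast_self]
  · rw [← AddSubgroup.zmultiples_eq_closure, Nat.card_zmultiples, addOrderOf_coe _ (NeZero.ne n),
      Nat.gcd_eq_right (Nat.div_dvd_of_dvd hmn), Nat.div_div_self hmn (NeZero.ne n)]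
    exact IsAddCyclic.card_ker_nsmul_le hm

theorem forall_nsmul_sub_eq_zero_iff {T : Finset (ZMod n)} {γ₀ : ZMod n} (h₀ : γ₀ ∈ T) :
    (∀ γ ∈ T, #T • (γ - γ₀) = 0) ↔
      #T ∣ n ∧ ∃ γ₁ : ZMod n, (T : Set (ZMod n)) =
        (γ₁ + ·) '' (AddSubgroup.closure {((n / #T : ℕ) : ZMod n)} : Set (ZMod n)) := by
  constructor
  · intro h
    have hT := IsAddCyclic.coe_eq_add_ker_nsmul h₀ h
    have hdvd : #T ∣ n := by
      have hcard : ((nsmulAddMonoidHom #T : ZMod n →+ ZMod n).ker : Set (ZMod n)).ncard = #T := by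
        rw [← Set.ncard_image_of_injective _ (add_right_injective γ₀), ← hT, Set.ncard_coe_finset]
      have := AddSubgroup.card_addSubgroup_dvd_card (nsmulAddMonoidHom #T : ZMod n →+ ZMod n).ker
      rwa [Nat.card_zmod, ← SetLike.coe_sort_coe, Nat.card_coe_set_eq, hcard] at this
    exact ⟨hdvd, γ₀, by rw [hT, ker_nsmul_eq_closure hdvd]⟩
  · rintro ⟨hdvd, γ₁, hT⟩ γ hγ
    rw [← ker_nsmul_eq_closure hdvd] at hT
    obtain ⟨a, ha, rfl⟩ : γ ∈ (γ₁ + ·) '' _ := hT ▸ mem_coe.mpr hγ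
    obtain ⟨b, hb, rfl⟩ : γ₀ ∈ (γ₁ + ·) '' _ := hT ▸ mem_coe.mpr h₀
    rw [add_sub_add_left_eq_sub]
    exact sub_mem ha hb

end ZMod

/-- With `ζ` a primitive `n`-th root of unity in a field `K` and `T` a nonempty
finite subset of `ZMod n` with `f_T = ∏_{γ ∈ T} (X - ζ^γ̃)`, the polynomial `f_T` is a binomial
`X^|T| - c` iff `|T|` divides `n` and `T` is a coset of the additive subgroup generated by the
image of `n / |T|`. -/
theorem binomial_iff_equal_difference {K : Type*} [Field K] (n : ℕ) (hn : 0 < n)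
    (ζ : K) (hζ : IsPrimitiveRoot ζ n) (T : Finset (ZMod n)) (hT : T.Nonempty) :
    (∃ c : K, ∏ γ ∈ T, (X - C (ζ ^ γ.val)) = X ^ T.card - C c) ↔
    (T.card ∣ n ∧ ∃ γ₀ : ZMod n, (T : Set (ZMod n)) =
      (γ₀ + ·) '' ((AddSubgroup.closure {(((n / T.card : ℕ) : ZMod n))} :
        AddSubgroup (ZMod n)) : Set (ZMod n))) := by
  classical
  have : NeZero n := ⟨hn.ne'⟩
  set ψ := AddChar.zmodChar n hζ.pow_eq_one
  have hψ : Function.Injective ψ := fun a b h =>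
    ZMod.val_injective n (hζ.pow_inj (ZMod.val_lt a) (ZMod.val_lt b) h)
  have hprod : ∏ γ ∈ T, (X - C (ζ ^ γ.val)) = ∏ r ∈ T.image ψ, (X - C r) :=
    (prod_image (f := fun r => X - C r) fun a _ b _ h => hψ h).symm
  have hcard : #(T.image ψ) = #T := card_image_of_injective T hψ
  obtain ⟨γ₀, h₀⟩ := id hT
  rw [← ZMod.forall_nsmul_sub_eq_zero_iff h₀, hprod]
  conv_lhs => rw [← hcard]
  simp_rw [prod_X_sub_C_eq_X_pow_sub_C_iff (hT.image ψ), hcard, forall_mem_image,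
    ← AddChar.pow_eq_pow_iff hψ]
  exact ⟨fun ⟨c, hc⟩ γ hγ => (hc hγ).trans (hc h₀).symm, fun h => ⟨_, h⟩⟩
end

section
/- Let F be a finite field of cardinality q, K a finite field that is an F-algebra, n a positive integer coprime to q, ζ ∈ K a primitive n-th root of unity, d a positive divisor of n, and γ an integer. Then the element ζ^{γ·(n/d)} lies in the range of the algebra map F → K (equivalently, the binomial X^{n/d} − ζ^{γ·(n/d)} has coefficients in F) if and only if γ·q ≡ γ (mod d). -/
/-!
`η := ζ ^ (n / d)` is a primitive `d`-th root of unity. An element of `K` comes from `F` exactly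
when the `q`-power Frobenius fixes it, and `η ^ (γ q) = η ^ γ` holds exactly when
`γ q ≡ γ (mod d)`.
-/

/-- `F` is the fixed field of `Gal(K/F)`, a group generated by the Frobenius `x ↦ x ^ |F|`. -/
theorem FiniteField.mem_range_algebraMap_iff_pow_card {F K : Type*} [Field F] [Fintype F]
    [Field K] [Finite K] [Algebra F K] (x : K) :
    x ∈ Set.range (algebraMap F K) ↔ x ^ Fintype.card F = x := by
  rw [IsGalois.mem_range_algebraMap_iff_fixed]
  refine ⟨fun h ↦ h (frobeniusAlgEquivOfAlgebraic F K), fun h σ ↦ ?_⟩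
  obtain ⟨k, rfl⟩ := (bijective_frobeniusAlgEquivOfAlgebraic_pow F K).2 σ
  rw [AlgEquiv.coe_pow]
  exact Function.IsFixedPt.iterate h k

theorem IsPrimitiveRoot.zpow_eq_zpow_iff_modEq {G₀ : Type*} [CommGroupWithZero G₀] {ζ : G₀}
    {k : ℕ} (h : IsPrimitiveRoot ζ k) (hζ : ζ ≠ 0) (a b : ℤ) :
    ζ ^ a = ζ ^ b ↔ a ≡ b [ZMOD k] := by
  rw [← div_eq_one_iff_eq (zpow_ne_zero b hζ), ← zpow_sub₀ hζ, h.zpow_eq_one_iff_dvd,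
    Int.modEq_comm, Int.modEq_iff_dvd]

theorem binomial_defined_over_base_iff_general {F K : Type*} [Field F] [Fintype F] [Field K]
    [Fintype K] [Algebra F K] (q : ℕ) (hq : Fintype.card F = q)
    (n : ℕ) (hn : 0 < n)
    (ζ : K) (hζ : IsPrimitiveRoot ζ n) (d : ℕ) (hdn : d ∣ n) (γ : ℤ) :
    ζ ^ (γ * ((n / d : ℕ) : ℤ)) ∈ Set.range (algebraMap F K) ↔
      γ * (q : ℤ) ≡ γ [ZMOD (d : ℤ)] := by
  have hη : IsPrimitiveRoot (ζ ^ (n / d)) d := hζ.pow hn (Nat.div_mul_cancel hdn).symm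
  have hη₀ : ζ ^ (n / d) ≠ 0 := pow_ne_zero _ (hζ.ne_zero hn.ne')
  rw [mul_comm, zpow_mul, zpow_natCast, FiniteField.mem_range_algebraMap_iff_pow_card, hq,
    ← zpow_natCast _ q, ← zpow_mul, hη.zpow_eq_zpow_iff_modEq hη₀]

/-- Let `F` be a finite field of cardinality `q`, `K` a finite field that is an
`F`-algebra, `n` coprime to `q`, `ζ ∈ K` a primitive `n`-th root of unity, `d` a positive
divisor of `n`, and `γ` an integer. Then `ζ^(γ·(n/d))` lies in the image of `F` in `K`
iff `γ·q ≡ γ (mod d)`. -/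
theorem binomial_defined_over_base_iff {F K : Type*} [Field F] [Fintype F] [Field K]
    [Fintype K] [Algebra F K] (q : ℕ) (hq : Fintype.card F = q)
    (n : ℕ) (hn : 0 < n) (hco : Nat.Coprime n q)
    (ζ : K) (hζ : IsPrimitiveRoot ζ n) (d : ℕ) (hd : 0 < d) (hdn : d ∣ n) (γ : ℤ) :
    ζ ^ (γ * ((n / d : ℕ) : ℤ)) ∈ Set.range (algebraMap F K) ↔
      γ * (q : ℤ) ≡ γ [ZMOD (d : ℤ)] :=
  binomial_defined_over_base_iff_general q hq n hn ζ hζ d hdn γ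
end

section
/- Let q be a prime power, n a positive integer coprime to q, and γ ∈ ZMod n. Let n_γ denote the additive order of γ in ZMod n. Then the q-cyclotomic coset c_{n/q}(γ) is an equal-difference set (i.e., a coset of the additive subgroup of ZMod n generated by the image of some positive divisor d of n) if and only if both of the following hold: (i) rad(n_γ) divides q − 1, and (ii) if 8 divides n_γ then q ≡ 1 (mod 4). -/
/-!
Let `m` be the additive order of `γ`. Then `γ * a` only depends on `a` modulo `m`, so the coset
is a faithful copy of the powers of `q` in `ZMod m`.

A translate of a subgroup is closed under `x + y - z`, so the powers of `q` modulo `m` are closed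
under adding `q - 1`. Modulo a prime `p ∣ m` this forces `q ≡ 1`: otherwise some multiple of
`q - 1` is `-1`, and `0` would be a power of `q`. Modulo `8` it rules out `q ≡ 3, 7`.

Conversely, under the two conditions, lifting the exponent prime power by prime power gives
`m ∣ q ^ i - 1 ↔ m ∣ (q - 1) * i`; when `q ≡ 3 mod 4` the lifting-the-exponent lemma fails at
`p = 2`, but then `8 ∤ m` and only `2` and `4` need to be checked by hand. Hence the
multiplicative order `t` of `q` modulo `m` divides `m` and satisfies `m ∣ (q - 1) * t`. The latter
puts the coset inside `γ + ⟨n / t⟩`, and both sets have `t` elements.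
-/

namespace Nat

variable {p q : ℕ}

theorem emultiplicity_pow_sub_one (hp : p.Prime) (hpq : p ∣ q - 1) (hq : ¬p ∣ q)
    (h2 : p ≠ 2 ∨ 4 ∣ q - 1) (i : ℕ) :
    emultiplicity p (q ^ i - 1) = emultiplicity p ((q - 1) * i) := by
  rw [emultiplicity_mul hp.prime]
  rcases hp.eq_two_or_odd' with rfl | hodd
  · have hq1 : 1 ≤ q := Nat.pos_of_ne_zero (by rintro rfl; exact hq (dvd_zero 2))
    have h4 : (4 : ℤ) ∣ q - 1 := by
      exact_mod_cast Int.natCast_dvd_natCast.mpr (h2.resolve_left (absurd rfl))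
    simp only [← Int.natCast_emultiplicity, Nat.cast_sub hq1, Nat.cast_sub (one_le_pow i q hq1)]
    simpa using Int.two_pow_sub_pow' i h4 (by exact_mod_cast hq)
  · simpa using Nat.emultiplicity_pow_sub_pow hp hodd hpq hq i

theorem four_dvd_pow_sub_one_iff (hq : q % 4 = 3) (i : ℕ) :
    4 ∣ q ^ i - 1 ↔ 4 ∣ (q - 1) * i := by
  have hq4 : (q : ZMod 4) = -1 := by
    rw [← ZMod.natCast_mod, hq]; decide
  rw [← ZMod.natCast_eq_zero_iff, Nat.cast_sub (one_le_pow _ _ (by omega)), Nat.cast_pow, hq4,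
    Nat.cast_one, sub_eq_zero, neg_one_pow_eq_one_iff_even (by decide), even_iff_two_dvd,
    dvd_iff_mod_eq_zero, dvd_iff_mod_eq_zero, mul_mod, show (q - 1) % 4 = 2 by omega]
  omega

theorem prime_pow_dvd_pow_sub_one_iff {k : ℕ} (hp : p.Prime) (hpq : p ∣ q - 1) (hq : ¬p ∣ q)
    (h : p ≠ 2 ∨ 4 ∣ q - 1 ∨ k ≤ 2) (i : ℕ) :
    p ^ k ∣ q ^ i - 1 ↔ p ^ k ∣ (q - 1) * i := by
  by_cases hlte : p ≠ 2 ∨ 4 ∣ q - 1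
  · simp only [pow_dvd_iff_le_emultiplicity, emultiplicity_pow_sub_one hp hpq hq hlte]
  obtain ⟨rfl, h4⟩ : p = 2 ∧ ¬4 ∣ q - 1 := by tauto
  have hk : k ≤ 2 := by tauto
  have h2 : 2 ∣ q ^ i - 1 := hpq.trans (sub_one_dvd_pow_sub_one q i)
  interval_cases k
  · simp
  · simpa [h2] using hpq.mul_right i
  · exact four_dvd_pow_sub_one_iff (by omega) i

theorem dvd_pow_sub_one_iff_dvd_sub_one_mul {m : ℕ} (hco : m.Coprime q)
    (hrad : ∀ p, p.Prime → p ∣ m → p ∣ q - 1) (h8 : 8 ∣ m → q % 4 = 1) (i : ℕ) :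
    m ∣ q ^ i - 1 ↔ m ∣ (q - 1) * i := by
  simp only [dvd_iff_prime_pow_dvd_dvd _ m]
  refine forall₃_congr fun p k hp => imp_congr_right fun hpk => ?_
  rcases k.eq_zero_or_pos with rfl | hk
  · simp
  have hpm : p ∣ m := (dvd_pow_self p hk.ne').trans hpk
  refine prime_pow_dvd_pow_sub_one_iff hp (hrad p hp hpm)
    (hp.coprime_iff_not_dvd.mp (hco.coprime_dvd_left hpm)) ?_ i
  by_contra! h
  obtain ⟨rfl, h4, hk⟩ := h
  have := h8 ((pow_dvd_pow 2 hk).trans hpk)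
  omega

theorem Prime.dvd_sub_one_of_exists_pow_add (hp : p.Prime) (hq : ¬p ∣ q)
    (h : ∀ i, ∃ k, (q : ZMod p) ^ i + q = q ^ k + 1) : p ∣ q - 1 := by
  have := Fact.mk hp
  set u := (q : ZMod p)
  have hu : u ≠ 0 := by rwa [Ne, ZMod.natCast_eq_zero_iff]
  have hmul (c : ℕ) : ∃ k, c * (u - 1) + 1 = u ^ k := by
    induction c with
    | zero => exact ⟨0, by simp⟩
    | succ c ih =>
      obtain ⟨i, hi⟩ := ih
      obtain ⟨k, hk⟩ := h i
      exact ⟨k, by push_cast; linear_combination hi + hk⟩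
  have hu1 : u = 1 := by
    by_contra hu1
    obtain ⟨k, hk⟩ := hmul (-(u - 1)⁻¹).val
    rw [ZMod.natCast_zmod_val, neg_mul, inv_mul_cancel₀ (sub_ne_zero.mpr hu1),
      neg_add_cancel] at hk
    exact pow_ne_zero k hu hk.symm
  have hq1 : 1 ≤ q := Nat.pos_of_ne_zero (by rintro rfl; exact hq (dvd_zero p))
  rw [← ZMod.natCast_eq_zero_iff, Nat.cast_sub hq1, Nat.cast_one]
  exact sub_eq_zero.mpr hu1

theorem mod_four_eq_one_of_exists_pow_add (hq : ¬2 ∣ q)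
    (h : ∀ i, ∃ k, (q : ZMod 8) ^ i + q = q ^ k + 1) : q % 4 = 1 := by
  obtain ⟨k, hk⟩ := h 1
  rw [pow_one, ← ZMod.natCast_mod q 8] at hk
  have hk2 : k % 2 < 2 := mod_lt k two_pos
  obtain h | h | h | h : q % 8 = 1 ∨ q % 8 = 3 ∨ q % 8 = 5 ∨ q % 8 = 7 := by omega
  -- `3` and `7` square to `1` modulo `8`, so `q ^ k ∈ {1, q}`, whereas `2 * q - 1 ≡ 5`.
  all_goals first
    | omega
    | exfalso
      rw [h, pow_eq_pow_mod (n := 2) k (by decide)] at hk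
      interval_cases k % 2 <;> revert hk <;> decide

theorem prod_primeFactors_dvd_iff_forall_prime_dvd {m k : ℕ} (hm : m ≠ 0) :
    (∏ p ∈ m.primeFactors, p) ∣ k ↔ ∀ p, p.Prime → p ∣ m → p ∣ k :=
  ⟨fun h _ hp hpm => (Finset.dvd_prod_of_mem _ (mem_primeFactors.mpr ⟨hp, hpm, hm⟩)).trans h,
    fun h => Finset.prod_primes_dvd _ (fun _ hp => (prime_of_mem_primeFactors hp).prime)
      fun p hp => h p (prime_of_mem_primeFactors hp) (dvd_of_mem_primeFactors hp)⟩

end Nat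

namespace ZMod

theorem exists_pow_add_eq_of_dvd {m d q : ℕ} (hd : d ∣ m)
    (h : ∀ i, ∃ k, (q : ZMod m) ^ i + q = q ^ k + 1) (i : ℕ) :
    ∃ k, (q : ZMod d) ^ i + q = q ^ k + 1 := by
  obtain ⟨k, hk⟩ := h i
  refine ⟨k, ?_⟩
  simpa only [map_add, map_pow, map_one, map_natCast] using congrArg (castHom hd (ZMod d)) hk

theorem pow_eq_one_iff_sub_one_mul_eq_zero {m q : ℕ} (hco : m.Coprime q)
    (hrad : ∀ p, p.Prime → p ∣ m → p ∣ q - 1) (h8 : 8 ∣ m → q % 4 = 1) (i : ℕ) :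
    (q : ZMod m) ^ i = 1 ↔ ((q : ZMod m) - 1) * i = 0 := by
  rcases q.eq_zero_or_pos with rfl | hq
  · obtain rfl : m = 1 := (Nat.coprime_zero_right m).mp hco
    exact iff_of_true (Subsingleton.elim _ _) (Subsingleton.elim _ _)
  rw [← Nat.cast_one, ← Nat.cast_sub hq, ← Nat.cast_mul, natCast_eq_zero_iff,
    ← Nat.dvd_pow_sub_one_iff_dvd_sub_one_mul hco hrad h8, ← natCast_eq_zero_iff,
    Nat.cast_sub (Nat.one_le_pow _ _ hq), sub_eq_zero, Nat.cast_pow, Nat.cast_one]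

theorem mem_zmultiples_natCast_div_iff {n t : ℕ} [NeZero n] (ht : t ∣ n) (x : ZMod n) :
    x ∈ AddSubgroup.zmultiples ((n / t : ℕ) : ZMod n) ↔ t • x = 0 := by
  have ht0 : 0 < t := Nat.pos_of_dvd_of_pos ht (Nat.pos_of_ne_zero (NeZero.ne n))
  constructor
  · rintro ⟨c, rfl⟩
    rw [smul_comm, nsmul_eq_mul, ← Nat.cast_mul, Nat.mul_div_cancel' ht, natCast_self, smul_zero]
  · intro hx
    obtain ⟨c, hc⟩ : n / t ∣ x.val := by
      rw [Nat.div_dvd_iff_dvd_mul ht ht0, ← natCast_eq_zero_iff, Nat.cast_mul, natCast_zmod_val,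
        ← nsmul_eq_mul, hx]
    refine ⟨c, ?_⟩
    dsimp only
    rw [natCast_zsmul, nsmul_eq_mul', ← Nat.cast_mul, ← hc, natCast_zmod_val]

theorem card_zmultiples_natCast_div {n t : ℕ} [NeZero n] (ht : t ∣ n) :
    Nat.card (AddSubgroup.zmultiples ((n / t : ℕ) : ZMod n)) = t := by
  rw [Nat.card_zmultiples, addOrderOf_coe _ (NeZero.ne n),
    Nat.gcd_eq_right (Nat.div_dvd_of_dvd ht), Nat.div_div_self ht (NeZero.ne n)]

end ZMod

theorem mul_natCast_eq_mul_natCast_iff {R : Type*} [Ring R] (γ : R) (a b : ℕ) :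
    γ * a = γ * b ↔ (a : ZMod (addOrderOf γ)) = b := by
  rw [← nsmul_eq_mul', ← nsmul_eq_mul', nsmul_eq_nsmul_iff_modEq, ZMod.natCast_eq_natCast_iff]

theorem add_sub_mem_of_eq_image_add {G : Type*} [AddCommGroup G] {s : Set G}
    {H : AddSubgroup G} {a : G} (hs : s = (a + ·) '' H) {x y z : G}
    (hx : x ∈ s) (hy : y ∈ s) (hz : z ∈ s) : x + y - z ∈ s := by
  subst hs
  obtain ⟨x, hx, rfl⟩ := hx
  obtain ⟨y, hy, rfl⟩ := hy
  obtain ⟨z, hz, rfl⟩ := hz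
  exact ⟨x + y - z, H.sub_mem (H.add_mem hx hy) hz, by dsimp only; abel⟩

section CyclotomicCoset

variable {n : ℕ} (γ : ZMod n) (q : ℕ)

theorem exists_pow_add_eq_of_eq_image_add {γ₀ : ZMod n} {H : AddSubgroup (ZMod n)}
    (h : {x : ZMod n | ∃ i : ℕ, x = γ * (q : ZMod n) ^ i} = (γ₀ + ·) '' H) (i : ℕ) :
    ∃ k, (q : ZMod (addOrderOf γ)) ^ i + q = q ^ k + 1 := by
  have mem (j : ℕ) : γ * (q : ZMod n) ^ j ∈ {x : ZMod n | ∃ i : ℕ, x = γ * (q : ZMod n) ^ i} :=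
    ⟨j, rfl⟩
  obtain ⟨k, hk⟩ := add_sub_mem_of_eq_image_add h (mem i) (mem 1) (mem 0)
  refine ⟨k, ?_⟩
  have : γ * ((q ^ i + q : ℕ) : ZMod n) = γ * ((q ^ k + 1 : ℕ) : ZMod n) := by
    push_cast; linear_combination hk
  simpa using (mul_natCast_eq_mul_natCast_iff γ _ _).mp this

theorem setOf_mul_pow_eq_image_add_zmultiples [NeZero n]
    (htn : orderOf (q : ZMod (addOrderOf γ)) ∣ n)
    (ht : ((q : ZMod (addOrderOf γ)) - 1) * orderOf (q : ZMod (addOrderOf γ)) = 0) :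
    {x : ZMod n | ∃ i : ℕ, x = γ * (q : ZMod n) ^ i} =
      (γ + ·) '' AddSubgroup.zmultiples
        ((n / orderOf (q : ZMod (addOrderOf γ)) : ℕ) : ZMod n) := by
  set u := (q : ZMod (addOrderOf γ))
  set t := orderOf u
  have hsub : {x : ZMod n | ∃ i : ℕ, x = γ * (q : ZMod n) ^ i} ⊆
      (γ + ·) '' AddSubgroup.zmultiples ((n / t : ℕ) : ZMod n) := by
    rintro _ ⟨i, rfl⟩
    refine ⟨γ * q ^ i - γ, ?_, add_sub_cancel γ _⟩
    rw [SetLike.mem_coe, ZMod.mem_zmultiples_natCast_div_iff htn]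
    have hu : u ^ i * t = t := by
      linear_combination (∑ j ∈ Finset.range i, u ^ j) * ht - t * geom_sum_mul u i
    have := (mul_natCast_eq_mul_natCast_iff γ (q ^ i * t) t).mpr (by push_cast; exact hu)
    push_cast at this
    rw [nsmul_eq_mul']
    linear_combination this
  have hinj : (Set.Iio t).InjOn (fun i => γ * (q : ZMod n) ^ i) := by
    intro i hi j hj hij
    refine pow_injOn_Iio_orderOf hi hj ?_
    simpa using (mul_natCast_eq_mul_natCast_iff γ (q ^ i) (q ^ j)).mp (by push_cast; exact hij)
  refine Set.eq_of_subset_of_ncard_le hsub ?_ (Set.toFinite _)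
  calc (((γ + ·) '' AddSubgroup.zmultiples ((n / t : ℕ) : ZMod n)) : Set (ZMod n)).ncard
      = t := by
        rw [Set.ncard_image_of_injective _ (add_right_injective γ), ← Nat.card_coe_set_eq,
          SetLike.coe_sort_coe, ZMod.card_zmultiples_natCast_div htn]
    _ = ((fun i => γ * (q : ZMod n) ^ i) '' Set.Iio t).ncard := by
        rw [hinj.ncard_image, ← Finset.coe_range, Set.ncard_coe_finset, Finset.card_range]
    _ ≤ _ := Set.ncard_le_ncard (by rintro _ ⟨i, -, rfl⟩; exact ⟨i, rfl⟩) (Set.toFinite _)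

end CyclotomicCoset

theorem cyclotomic_coset_equal_difference_iff_general (q n : ℕ) (hn : 0 < n)
    (hco : Nat.Coprime n q) (γ : ZMod n) :
    (∃ d : ℕ, 0 < d ∧ d ∣ n ∧ ∃ γ₀ : ZMod n,
        {x : ZMod n | ∃ i : ℕ, x = γ * (q : ZMod n) ^ i} =
          (γ₀ + ·) '' ((AddSubgroup.closure {((d : ZMod n))} :
            AddSubgroup (ZMod n)) : Set (ZMod n))) ↔
    ((∏ p ∈ (addOrderOf γ).primeFactors, p) ∣ q - 1 ∧
      (8 ∣ addOrderOf γ → q % 4 = 1)) := by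
  have : NeZero n := ⟨hn.ne'⟩
  set m := addOrderOf γ
  have hmn : m ∣ n := by simpa using addOrderOf_dvd_natCard γ
  have hcm : m.Coprime q := hco.coprime_dvd_left hmn
  have hndvd {p : ℕ} (hp : p.Prime) (hpm : p ∣ m) : ¬p ∣ q :=
    hp.coprime_iff_not_dvd.mp (hcm.coprime_dvd_left hpm)
  rw [Nat.prod_primeFactors_dvd_iff_forall_prime_dvd (addOrderOf_pos γ).ne']
  constructor
  · rintro ⟨d, -, -, γ₀, hC⟩
    have h := exists_pow_add_eq_of_eq_image_add γ q hC
    refine ⟨fun p hp hpm => hp.dvd_sub_one_of_exists_pow_add (hndvd hp hpm)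
      (ZMod.exists_pow_add_eq_of_dvd hpm h), fun h8 => ?_⟩
    exact Nat.mod_four_eq_one_of_exists_pow_add (hndvd Nat.prime_two (dvd_trans (by norm_num) h8))
      (ZMod.exists_pow_add_eq_of_dvd h8 h)
  · rintro ⟨hrad, h8⟩
    have key := ZMod.pow_eq_one_iff_sub_one_mul_eq_zero hcm hrad h8
    have htn : orderOf (q : ZMod m) ∣ n :=
      (orderOf_dvd_of_pow_eq_one ((key m).mpr (by simp))).trans hmn
    refine ⟨n / orderOf (q : ZMod m), Nat.div_pos (Nat.le_of_dvd hn htn)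
      (Nat.pos_of_dvd_of_pos htn hn), Nat.div_dvd_of_dvd htn, γ, ?_⟩
    rw [← AddSubgroup.zmultiples_eq_closure]
    exact setOf_mul_pow_eq_image_add_zmultiples γ q htn ((key _).mp (pow_orderOf_eq_one _))

/-- The `q`-cyclotomic coset `c_{n/q}(γ) = {γ·q^i : i ∈ ℕ}` is an
equal-difference set (a coset of the additive subgroup of `ZMod n` generated by the image of
some positive divisor `d` of `n`) iff `rad(n_γ) ∣ q - 1` and (`8 ∣ n_γ → q ≡ 1 (mod 4)`),
where `n_γ` is the additive order of `γ`. -/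
theorem cyclotomic_coset_equal_difference_iff (q n : ℕ) (hq : IsPrimePow q) (hn : 0 < n)
    (hco : Nat.Coprime n q) (γ : ZMod n) :
    (∃ d : ℕ, 0 < d ∧ d ∣ n ∧ ∃ γ₀ : ZMod n,
        {x : ZMod n | ∃ i : ℕ, x = γ * (q : ZMod n) ^ i} =
          (γ₀ + ·) '' ((AddSubgroup.closure {((d : ZMod n))} :
            AddSubgroup (ZMod n)) : Set (ZMod n))) ↔
    ((∏ p ∈ (addOrderOf γ).primeFactors, p) ∣ q - 1 ∧
      (8 ∣ addOrderOf γ → q % 4 = 1)) :=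
  cyclotomic_coset_equal_difference_iff_general q n hn hco γ
end

section
/- Let q be a prime power, n a positive integer coprime to q, γ ∈ ZMod n, τ = |c_{n/q}(γ)|, and ω = ω_γ. Then ω divides τ, n·ω/τ is a positive divisor of n, the sets c_{n/q^{ω}}(γ·q^i) for 0 ≤ i < ω are pairwise disjoint equal-difference sets with common difference n·ω/τ whose union is c_{n/q}(γ), and moreover this MED representation is the coarsest: every positive divisor d of n whose image satisfies d + c_{n/q}(γ) = c_{n/q}(γ) is a multiple of n·ω/τ. -/
open scoped BigOperators

lemma med_bin {p : ℕ} (hp : p.Prime) {d : ℕ} (hpd : p ∣ d) {x : ℤ}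
    (hx : (d : ℤ) ∣ x - 1) : ((d * p : ℕ) : ℤ) ∣ x ^ p - 1 := by
  have hS : (d : ℤ) ∣ (∑ i ∈ Finset.range p, x ^ i) - p := by
    have h1 : (∑ i ∈ Finset.range p, x ^ i) - p = ∑ i ∈ Finset.range p, (x ^ i - 1) := by
      rw [Finset.sum_sub_distrib]; simp
    rw [h1]
    refine Finset.dvd_sum fun i _ => hx.trans ?_
    simpa using sub_dvd_pow_sub_pow x 1 i
  have key : x ^ p - 1 = (x - 1) * ((∑ i ∈ Finset.range p, x ^ i) - p) + (x - 1) * p := by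
    linear_combination (geom_sum_mul x p).symm
  rw [key]
  push_cast
  refine dvd_add ?_ ?_
  · calc ((d : ℤ) * p) ∣ (d : ℤ) * d := by
          refine mul_dvd_mul_left _ ?_; exact_mod_cast hpd
      _ ∣ (x - 1) * ((∑ i ∈ Finset.range p, x ^ i) - p) := mul_dvd_mul hx hS
  · exact mul_dvd_mul hx dvd_rfl

/-- Direction 1: if all primes of `m` divide `d`, `d ∣ m`, `x ≡ 1 mod d`,
then `x ^ (m/d) ≡ 1 mod m`. -/
lemma med_dir1 {m : ℕ} (hm : 0 < m) : ∀ (c d : ℕ), c = m / d → d ∣ m → 0 < d →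
    (∀ p : ℕ, p.Prime → p ∣ m → p ∣ d) → ∀ x : ℤ, (d : ℤ) ∣ x - 1 →
    (m : ℤ) ∣ x ^ c - 1 := by
  intro c
  induction c using Nat.strong_induction_on with
  | _ c IH =>
    intro d hc hdm hd hrad x hx
    obtain ⟨e, he⟩ := hdm
    have hce : c = e := by rw [hc, he, Nat.mul_div_cancel_left _ hd]
    rcases Nat.eq_zero_or_pos e with h0 | hepos
    · rw [h0, mul_zero] at he; omega
    rcases eq_or_lt_of_le (Nat.succ_le_of_lt hepos) with h1 | h1
    · -- e = 1, m = d
      have he1 : e = 1 := h1.symm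
      subst he1
      rw [mul_one] at he
      rw [hce, pow_one, he]; exact hx
    · -- pick prime of e
      have he1 : e ≠ 1 := by omega
      set p := e.minFac with hp
      have hpp : p.Prime := Nat.minFac_prime he1
      have hpe : p ∣ e := Nat.minFac_dvd e
      have hpm : p ∣ m := he ▸ hpe.mul_left d
      have hdp : d * p ∣ m := by
        rw [he]; exact mul_dvd_mul_left d hpe
      have hstep : ((d * p : ℕ) : ℤ) ∣ x ^ p - 1 := med_bin hpp (hrad p hpp hpm) hx
      have hlt : e / p < c := by
        rw [hce]
        exact Nat.div_lt_self hepos hpp.one_lt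
      have hrec := IH (e / p) hlt (d * p) ?_ hdp (Nat.mul_pos hd hpp.pos) ?_ (x ^ p) hstep
      · rw [← pow_mul, mul_comm p (e/p), Nat.div_mul_cancel hpe] at hrec
        rwa [hce]
      · rw [he, Nat.mul_div_mul_left _ _ hd]
      · exact fun r hr hrm => (hrad r hr hrm).mul_right p

lemma med_emult_eq_fact {p n : ℕ} (pp : p.Prime) (hn : n ≠ 0) :
    emultiplicity p n = (n.factorization p : ℕ∞) := by
  have hfin : FiniteMultiplicity p n := Nat.finiteMultiplicity_iff.mpr ⟨pp.ne_one, hn.bot_lt⟩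
  rw [hfin.emultiplicity_eq_multiplicity, Nat.multiplicity_eq_factorization pp hn]

lemma med_m4 {a k : ℕ} (ha : a % 4 = 3) (h : a ^ k ≡ 1 [MOD 4]) : Even k := by
  have h1 : ((a ^ k : ℕ) : ZMod 4) = ((1 : ℕ) : ZMod 4) :=
    (ZMod.natCast_eq_natCast_iff _ _ _).mpr h
  have h2 : ((a : ℕ) : ZMod 4) = -1 := by
    have : a ≡ 3 [MOD 4] := by unfold Nat.ModEq; omega
    have h3 : ((a : ℕ) : ZMod 4) = ((3 : ℕ) : ZMod 4) := (ZMod.natCast_eq_natCast_iff _ _ _).mpr this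
    rw [h3]; decide
  push_cast at h1
  rw [h2] at h1
  exact (neg_one_pow_eq_one_iff_even (by decide)).mp h1

lemma med_pow8 {q : ℕ} (hq : q % 2 = 1) (a : ℕ) : q ^ a ≡ q ^ (a % 2) [MOD 8] := by
  obtain ⟨j, hj⟩ : ∃ j, q = 2 * j + 1 := ⟨q / 2, by omega⟩
  obtain ⟨c, hc⟩ : ∃ c, j * (j + 1) = 2 * c := (Nat.even_mul_succ_self j).exists_two_nsmul _
  have h2 : q ^ 2 ≡ 1 [MOD 8] := by
    have : q ^ 2 = 8 * c + 1 := by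
      rw [hj]
      calc (2 * j + 1) ^ 2 = 4 * (j * (j + 1)) + 1 := by ring
        _ = 8 * c + 1 := by rw [hc]; ring
    unfold Nat.ModEq; omega
  calc q ^ a = (q ^ 2) ^ (a / 2) * q ^ (a % 2) := by
        rw [← pow_mul, ← pow_add]; congr 1; omega
    _ ≡ 1 ^ (a / 2) * q ^ (a % 2) [MOD 8] := (h2.pow _).mul_right _
    _ = q ^ (a % 2) := by rw [one_pow, one_mul]

lemma med_38 {q a b : ℕ} (hq : q % 2 = 1) (h3 : q ^ a ≡ 3 [MOD 8])
    (h5 : q ^ b ≡ 5 [MOD 8]) : False := by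
  have ha := (med_pow8 hq a).symm.trans h3
  have hb := (med_pow8 hq b).symm.trans h5
  have ha2 : a % 2 = 0 ∨ a % 2 = 1 := by omega
  have hb2 : b % 2 = 0 ∨ b % 2 = 1 := by omega
  rcases ha2 with h | h <;> rcases hb2 with h' | h' <;>
    rw [h] at ha <;> rw [h'] at hb <;>
    simp only [pow_zero, pow_one] at ha hb <;>
    unfold Nat.ModEq at ha hb <;> omega

lemma med_dir2 {m e k : ℕ} (hm : 0 < m) (he : 0 < e)
    (hrad : ∀ p : ℕ, p.Prime → p ∣ m → p ∣ e) (h2 : 8 ∣ m → 4 ∣ e)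
    (hk : (e + 1) ^ k ≡ 1 [MOD m]) : m / m.gcd e ∣ k := by
  rcases Nat.eq_zero_or_pos k with rfl | hkpos
  · exact dvd_zero _
  set x := e + 1 with hx
  have hgd : m.gcd e ∣ m := Nat.gcd_dvd_left m e
  have hgpos : 0 < m.gcd e := Nat.gcd_pos_of_pos_left e hm
  have hq0 : m / m.gcd e ≠ 0 := by
    have := Nat.div_pos (Nat.le_of_dvd hm hgd) hgpos; omega
  rw [← Nat.factorization_le_iff_dvd hq0 hkpos.ne', Finsupp.le_def]
  intro p
  by_cases pp : p.Prime
  swap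
  · simp [Nat.factorization_eq_zero_of_not_prime _ pp]
  rw [Nat.factorization_div hgd, Finsupp.tsub_apply,
    Nat.factorization_gcd hm.ne' he.ne', Finsupp.inf_apply]
  set α := m.factorization p with hα
  set v := e.factorization p with hv
  set κ := k.factorization p with hκ
  change α - min α v ≤ κ
  rcases le_or_gt α v with hle | hlt
  · omega
  -- v < α, so p ∣ m, hence p ∣ e, v ≥ 1
  have hpm : p ∣ m := by
    rw [← pow_one p]
    exact (Nat.Prime.pow_dvd_iff_le_factorization pp hm.ne').mpr (by omega)
  have hpe : p ∣ e := hrad p pp hpm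
  have hv1 : 1 ≤ v := by
    rw [hv]
    rw [← Nat.Prime.pow_dvd_iff_le_factorization pp he.ne', pow_one]; exact hpe
  have hpx : ¬ p ∣ x := by
    intro hdx
    have hds := Nat.dvd_sub hdx hpe
    rw [show x - e = 1 by omega] at hds
    exact pp.one_lt.ne' (Nat.dvd_one.mp hds)
  have hxk1 : 1 ≤ x ^ k := Nat.one_le_pow _ _ (by omega)
  have hmdvd : m ∣ x ^ k - 1 := (Nat.modEq_iff_dvd' hxk1).mp hk.symm
  have hFne : x ^ k - 1 ≠ 0 := by
    have : 2 ≤ x := by omega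
    have : 2 ^ k ≤ x ^ k := Nat.pow_le_pow_left this k
    have : 2 ≤ x ^ k := le_trans (by have := Nat.one_lt_two_pow_iff.mpr hkpos.ne'; omega) this
    omega
  have hαF : α ≤ (x ^ k - 1).factorization p := by
    rw [← Nat.Prime.pow_dvd_iff_le_factorization pp hFne]
    exact dvd_trans (Nat.ordProj_dvd m p) hmdvd
  -- now show (x^k-1).factorization p ≤ v + κ
  suffices hbound : α - min α v ≤ κ by exact hbound
  rcases pp.eq_two_or_odd' with rfl | podd
  · -- p = 2
    rcases Nat.lt_or_ge v 2 with hv2 | hv2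
    · -- v = 1 : α ≤ 2 and k even
      have hv1' : v = 1 := by omega
      have hne4 : ¬ (4 ∣ e) := by
        intro h4
        have : 2 ≤ v := by
          rw [hv, ← Nat.Prime.pow_dvd_iff_le_factorization pp he.ne']
          exact_mod_cast h4
        omega
      have hα2 : α ≤ 2 := by
        by_contra hα3
        have h8 : (2:ℕ)^3 ∣ m :=
          (Nat.Prime.pow_dvd_iff_le_factorization pp hm.ne').mpr (by omega)
        norm_num at h8
        exact hne4 (h2 h8)
      have h4m : 4 ∣ m := by
        have : (2:ℕ)^2 ∣ m := (Nat.Prime.pow_dvd_iff_le_factorization pp hm.ne').mpr (by omega)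
        simpa using this
      have hx4 : x % 4 = 3 := by
        have h2e : 2 ∣ e := hpe
        have : e % 4 = 2 := by
          rcases h2e with ⟨c, rfl⟩
          rcases Nat.even_or_odd c with ⟨j, rfl⟩ | ⟨j, rfl⟩
          · exfalso; exact hne4 ⟨j, by ring⟩
          · omega
        omega
      have hkeven : Even k := med_m4 hx4 (hk.of_dvd h4m)
      have hκ1 : 1 ≤ κ := by
        rw [hκ, ← Nat.Prime.pow_dvd_iff_le_factorization pp hkpos.ne', pow_one]
        exact hkeven.two_dvd
      omega
    · -- v ≥ 2 : LTE for 2 with 4 ∣ x - 1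
      have h4e : (4:ℕ) ∣ e := by
        have h4 : (2:ℕ)^2 ∣ e :=
          (Nat.Prime.pow_dvd_iff_le_factorization pp he.ne').mpr (by omega)
        norm_num at h4
        exact h4
      have h4x : (4:ℤ) ∣ (x:ℤ) - 1 := by
        have hxe : ((x:ℤ) - 1) = (e : ℤ) := by push_cast [hx]; ring
        rw [hxe]; exact_mod_cast h4e
      have h2x : ¬ (2:ℤ) ∣ (x:ℤ) := by exact_mod_cast fun h => hpx (by exact_mod_cast h)
      have hlte := Int.two_pow_sub_pow' k h4x h2x
      have hcast1 : (x:ℤ) ^ k - 1 ^ k = ((x ^ k - 1 : ℕ) : ℤ) := by push_cast [hxk1]; ring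
      have hcast2 : (x:ℤ) - 1 = ((e : ℕ) : ℤ) := by push_cast [hx]; ring
      rw [show (2:ℤ) = ((2:ℕ):ℤ) by norm_num] at hlte
      rw [hcast1, hcast2, Int.natCast_emultiplicity, Int.natCast_emultiplicity,
        Int.natCast_emultiplicity] at hlte
      rw [med_emult_eq_fact pp hFne, med_emult_eq_fact pp he.ne',
        med_emult_eq_fact pp hkpos.ne'] at hlte
      have hfk : (x ^ k - 1).factorization 2 = v + κ := by exact_mod_cast hlte
      omega
  · -- p odd
    have hpxy : p ∣ x - 1 := by simpa [hx] using hpe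
    have hlte := Nat.emultiplicity_pow_sub_pow pp podd hpxy hpx k
    rw [one_pow] at hlte
    have hx1e : x - 1 = e := by omega
    rw [hx1e, med_emult_eq_fact pp hFne, med_emult_eq_fact pp he.ne',
      med_emult_eq_fact pp hkpos.ne'] at hlte
    have hfk : (x ^ k - 1).factorization p = v + κ := by exact_mod_cast hlte
    omega

lemma med_order {m e : ℕ} (hm : 0 < m) (he : 0 < e)
    (hrad : ∀ p : ℕ, p.Prime → p ∣ m → p ∣ e) (h2 : 8 ∣ m → 4 ∣ e) :
    orderOf (((e + 1 : ℕ)) : ZMod m) = m / m.gcd e := by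
  set g := m.gcd e with hg
  have hgd : g ∣ m := Nat.gcd_dvd_left m e
  have hge : g ∣ e := Nat.gcd_dvd_right m e
  have hgpos : 0 < g := Nat.gcd_pos_of_pos_left e hm
  refine Nat.dvd_antisymm ?_ ?_
  · -- orderOf ∣ m/g via dir1
    refine orderOf_dvd_of_pow_eq_one ?_
    have h1 := med_dir1 hm (m / g) g rfl hgd hgpos
      (fun p hp hpm => Nat.dvd_gcd hpm (hrad p hp hpm)) ((e : ℤ) + 1)
      (by simpa using (Int.natCast_dvd_natCast.mpr hge))
    have h2' : ((((e : ℤ) + 1) ^ (m / g) - 1 : ℤ) : ZMod m) = 0 :=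
      (ZMod.intCast_zmod_eq_zero_iff_dvd _ _).mpr h1
    push_cast at h2'
    push_cast
    linear_combination h2'
  · -- m/g ∣ orderOf via dir2
    set o := orderOf (((e + 1 : ℕ)) : ZMod m) with ho
    have h1 : (((e + 1 : ℕ)) : ZMod m) ^ o = 1 := pow_orderOf_eq_one _
    have h2' : (((e + 1) ^ o : ℕ) : ZMod m) = ((1 : ℕ) : ZMod m) := by push_cast; push_cast at h1; exact_mod_cast h1
    exact med_dir2 hm he hrad h2 ((ZMod.natCast_eq_natCast_iff _ _ _).mp h2')

lemma med_card_range {α : Type*} [DecidableEq α] (f : ℕ → α) (T : ℕ) (hT : 0 < T)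
    (hf : ∀ a b, f a = f b ↔ a ≡ b [MOD T]) : (Set.range f).ncard = T := by
  have himg : Set.range f = ↑((Finset.range T).image f) := by
    ext x
    simp only [Set.mem_range, Finset.coe_image, Set.mem_image, Finset.mem_coe,
      Finset.mem_range]
    constructor
    · rintro ⟨i, rfl⟩
      exact ⟨i % T, Nat.mod_lt _ hT, ((hf _ _).mpr (Nat.mod_modEq i T))⟩
    · rintro ⟨i, _, rfl⟩; exact ⟨i, rfl⟩
  rw [himg, Set.ncard_coe_finset, Finset.card_image_of_injOn, Finset.card_range]
  intro a ha b hb hab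
  simp only [Finset.coe_range, Set.mem_Iio] at ha hb
  have h := (hf a b).mp hab
  unfold Nat.ModEq at h
  rwa [Nat.mod_eq_of_lt ha, Nat.mod_eq_of_lt hb] at h

lemma med_mem_closure {n d : ℕ} [NeZero n] (hd : d ∣ n) (z : ZMod n) :
    z ∈ AddSubgroup.closure {((d : ℕ) : ZMod n)} ↔ d ∣ z.val := by
  constructor
  · intro hz
    obtain ⟨j, hj⟩ := AddSubgroup.mem_closure_singleton.mp hz
    have hz2 : z = (((j * (d : ℤ)) : ℤ) : ZMod n) := by
      rw [← hj, zsmul_eq_mul]; push_cast; ring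
    have hval : ((z.val : ℤ)) = (j * (d : ℤ)) % (n : ℤ) := by
      rw [hz2]; exact ZMod.val_intCast _
    have hdvd : (d : ℤ) ∣ ((z.val : ℤ)) := by
      rw [hval, Int.emod_def]
      exact dvd_sub ⟨j, mul_comm j _⟩ (Dvd.dvd.mul_right (Int.natCast_dvd_natCast.mpr hd) _)
    exact_mod_cast hdvd
  · rintro ⟨c, hc⟩
    refine AddSubgroup.mem_closure_singleton.mpr ⟨(c : ℤ), ?_⟩
    rw [zsmul_eq_mul]
    push_cast
    rw [← Nat.cast_mul, mul_comm, ← hc, ZMod.natCast_zmod_val]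

lemma med_card_closure {n d : ℕ} (hn : 0 < n) (hd : d ∣ n) :
    ((AddSubgroup.closure {((d : ℕ) : ZMod n)} : AddSubgroup (ZMod n)) :
      Set (ZMod n)).ncard = n / d := by
  haveI : NeZero n := ⟨hn.ne'⟩
  rw [← Nat.card_coe_set_eq]
  have h1 : Nat.card ((AddSubgroup.closure {((d : ℕ) : ZMod n)} : AddSubgroup (ZMod n)) :
      Set (ZMod n)) = Nat.card (AddSubgroup.zmultiples ((d : ℕ) : ZMod n)) := by
    rw [AddSubgroup.zmultiples_eq_closure]
    rfl
  rw [h1, Nat.card_zmultiples, ZMod.addOrderOf_coe _ hn.ne', Nat.gcd_eq_right hd]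

lemma med_modeq_cancel {c a b T : ℕ} (hc : 0 < c) :
    c * a ≡ c * b [MOD c * T] ↔ a ≡ b [MOD T] := by
  rw [Nat.modEq_iff_dvd, Nat.modEq_iff_dvd]
  push_cast
  constructor
  · intro h
    have h2 : (c:ℤ) * T ∣ (c:ℤ) * (b - a) := by
      convert h using 1; ring
    exact (mul_dvd_mul_iff_left (by exact_mod_cast hc.ne' : (c:ℤ) ≠ 0)).mp h2
  · intro h
    have h2 : (c:ℤ) * T ∣ (c:ℤ) * (b - a) := mul_dvd_mul_left _ h
    convert h2 using 1; ring


lemma med_cast_pow_eq_one_iff {m q : ℕ} (hq : 0 < q) (s : ℕ) :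
    ((q : ℕ) : ZMod m) ^ s = 1 ↔ m ∣ q ^ s - 1 := by
  have h1 : ((q : ℕ) : ZMod m) ^ s = ((q ^ s : ℕ) : ZMod m) := by push_cast; ring
  have h2 : (1 : ZMod m) = ((1 : ℕ) : ZMod m) := by push_cast; rfl
  rw [h1, h2, ZMod.natCast_eq_natCast_iff]
  have h3 : 1 ≤ q ^ s := Nat.one_le_pow _ _ hq
  constructor
  · intro h; exact (Nat.modEq_iff_dvd' h3).mp h.symm
  · intro h; exact ((Nat.modEq_iff_dvd' h3).mpr h).symm

/-- Let `τ = |c_{n/q}(γ)|` and `ω = ω_γ`. Then `ω ∣ τ`, `n·ω/τ` is a positive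
divisor of `n`, the sets `c_{n/q^ω}(γ·q^i)` for `0 ≤ i < ω` are pairwise disjoint
equal-difference sets with common difference `n·ω/τ` whose union is `c_{n/q}(γ)`, and this MED
representation is the coarsest: every positive divisor `d` of `n` with
`d + c_{n/q}(γ) = c_{n/q}(γ)` is a multiple of `n·ω/τ`. -/
theorem coarsest_med_of_cyclotomic_coset (q n : ℕ) (hq : IsPrimePow q) (hn : 0 < n)
    (hco : Nat.Coprime n q) (γ : ZMod n)
    (C : Set (ZMod n)) (hC : C = {x : ZMod n | ∃ i : ℕ, x = γ * (q : ZMod n) ^ i})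
    (τ : ℕ) (hτ : τ = Nat.card C)
    (nγ : ℕ) (hnγ : nγ = addOrderOf γ)
    (r : ℕ) (hr : r = ∏ p ∈ nγ.primeFactors, p)
    (ω : ℕ) (hω : ω = if q ^ orderOf (q : ZMod r) % 4 = 3 ∧ 8 ∣ nγ
      then 2 * orderOf (q : ZMod r) else orderOf (q : ZMod r)) :
    ω ∣ τ ∧ 0 < n * ω / τ ∧ (n * ω / τ) ∣ n ∧
    (∀ i < ω, ∃ γ₀ : ZMod n,
      {x : ZMod n | ∃ j : ℕ, x = γ * (q : ZMod n) ^ i * ((q : ZMod n) ^ ω) ^ j} =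
        (γ₀ + ·) '' ((AddSubgroup.closure {(((n * ω / τ : ℕ) : ZMod n))} :
          AddSubgroup (ZMod n)) : Set (ZMod n))) ∧
    (∀ i < ω, ∀ j < ω, i ≠ j →
      Disjoint {x : ZMod n | ∃ k : ℕ, x = γ * (q : ZMod n) ^ i * ((q : ZMod n) ^ ω) ^ k}
        {x : ZMod n | ∃ k : ℕ, x = γ * (q : ZMod n) ^ j * ((q : ZMod n) ^ ω) ^ k}) ∧
    C = ⋃ i ∈ Finset.range ω,
      {x : ZMod n | ∃ k : ℕ, x = γ * (q : ZMod n) ^ i * ((q : ZMod n) ^ ω) ^ k} ∧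
    (∀ d : ℕ, 0 < d → d ∣ n → (((d : ZMod n)) + ·) '' C = C → (n * ω / τ) ∣ d) := by
  haveI : NeZero n := ⟨hn.ne'⟩
  have hm0 : 0 < nγ := by rw [hnγ]; exact addOrderOf_pos γ
  haveI : NeZero nγ := ⟨hm0.ne'⟩
  have hmn : nγ ∣ n := by
    rw [hnγ]
    simpa [ZMod.card] using (addOrderOf_dvd_card (x := γ))
  have hq2 : 2 ≤ q := hq.two_le
  have hcopm : Nat.Coprime nγ q := Nat.Coprime.coprime_dvd_left hmn hco
  have hrm : r ∣ nγ := by rw [hr]; exact Nat.prod_primeFactors_dvd nγ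
  have hrpos : 0 < r := Nat.pos_of_dvd_of_pos hrm hm0
  haveI : NeZero r := ⟨hrpos.ne'⟩
  set u : (ZMod nγ)ˣ := ZMod.unitOfCoprime q hcopm.symm with hu
  set τ' := orderOf u with hτ'
  have hτ'pos : 0 < τ' := orderOf_pos u
  have hucast : ∀ a : ℕ, ((u ^ a : (ZMod nγ)ˣ) : ZMod nγ) = ((q ^ a : ℕ) : ZMod nγ) := by
    intro a; push_cast [hu, ZMod.coe_unitOfCoprime]; ring
  -- `q^a ≡ q^b mod nγ ↔ a ≡ b mod τ'`
  have hqq : ∀ a b : ℕ, q ^ a ≡ q ^ b [MOD nγ] ↔ a ≡ b [MOD τ'] := by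
    intro a b
    rw [← ZMod.natCast_eq_natCast_iff, ← hucast, ← hucast]
    rw [show (((u ^ a : (ZMod nγ)ˣ)) : ZMod nγ) = ((u ^ b : (ZMod nγ)ˣ) : ZMod nγ) ↔
      u ^ a = u ^ b from ⟨fun h => Units.ext h, fun h => by rw [h]⟩]
    exact pow_eq_pow_iff_modEq
  -- bridging: equality in the coset ↔ congruence of exponents
  have hbr : ∀ a b : ℕ, (γ * (q : ZMod n) ^ a = γ * (q : ZMod n) ^ b) ↔ a ≡ b [MOD τ'] := by
    intro a b
    have hcast : ∀ c : ℕ, γ * (q : ZMod n) ^ c = (q ^ c) • γ := by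
      intro c; rw [nsmul_eq_mul]; push_cast; ring
    rw [hcast, hcast, nsmul_eq_nsmul_iff_modEq, ← hnγ, hqq]
  have hC' : C = Set.range (fun i => γ * (q : ZMod n) ^ i) := by
    rw [hC]; ext x; simp [eq_comm]
  have hτeq : τ = τ' := by
    rw [hτ, hC', Nat.card_coe_set_eq, med_card_range _ τ' hτ'pos hbr]
  -- the order ρ of q modulo the radical r
  set ρ := orderOf ((q : ℕ) : ZMod r) with hρ
  have hcoqr : Nat.Coprime q r := (Nat.Coprime.coprime_dvd_left hrm hcopm).symm
  set ur : (ZMod r)ˣ := ZMod.unitOfCoprime q hcoqr with hur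
  have hρu : ρ = orderOf ur := by
    rw [hρ, ← orderOf_units, hur, ZMod.coe_unitOfCoprime]
  have hρpos : 0 < ρ := hρu ▸ orderOf_pos ur
  have hωdef : ω = ρ ∨ (ω = 2 * ρ ∧ q ^ ρ % 4 = 3 ∧ 8 ∣ nγ) := by
    rw [hω]
    by_cases hcond : q ^ orderOf ((q : ℕ) : ZMod r) % 4 = 3 ∧ 8 ∣ nγ
    · right; rw [if_pos hcond]; exact ⟨rfl, hcond⟩
    · left; rw [if_neg hcond]
  have hρω : ρ ∣ ω := by
    rcases hωdef with h | ⟨h, _⟩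
    · exact ⟨1, by omega⟩
    · exact ⟨2, by omega⟩
  have hωpos : 0 < ω := by
    rcases hωdef with h | ⟨h, _⟩ <;> omega
  have hrq : r ∣ q ^ ρ - 1 := by
    have h1 : ((q : ℕ) : ZMod r) ^ ρ = 1 := pow_orderOf_eq_one _
    have h2 : ((q ^ ρ : ℕ) : ZMod r) = ((1 : ℕ) : ZMod r) := by push_cast; simpa using h1
    exact (Nat.modEq_iff_dvd' (Nat.one_le_pow _ _ (by omega))).mp
      ((ZMod.natCast_eq_natCast_iff _ _ _).mp h2).symm
  have hpowdvd : ∀ a b : ℕ, a ∣ b → q ^ a - 1 ∣ q ^ b - 1 := by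
    intro a b ⟨c, hc⟩
    calc q ^ a - 1 ∣ (q ^ a) ^ c - 1 ^ c := by
          simpa using Nat.sub_dvd_pow_sub_pow (q ^ a) 1 c
      _ = q ^ b - 1 := by rw [← pow_mul, ← hc, one_pow]
  have hrqω : r ∣ q ^ ω - 1 := hrq.trans (hpowdvd ρ ω hρω)
  set e := q ^ ω - 1 with he
  have hqω1 : 1 ≤ q ^ ω := Nat.one_le_pow _ _ (by omega)
  have hqω2 : 2 ≤ q ^ ω := by
    calc 2 ≤ q := hq2
      _ = q ^ 1 := (pow_one q).symm
      _ ≤ q ^ ω := Nat.pow_le_pow_right (by omega) hωpos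
  have he1 : e + 1 = q ^ ω := by omega
  have hepos : 0 < e := by omega
  have hrade : ∀ p : ℕ, p.Prime → p ∣ nγ → p ∣ e := by
    intro p pp hpm
    have hpr : p ∣ r := by
      rw [hr]
      exact Finset.dvd_prod_of_mem _ (Nat.mem_primeFactors.mpr ⟨pp, hpm, hm0.ne'⟩)
    exact hpr.trans hrqω
  have hqodd8 : 2 ∣ nγ → q % 2 = 1 := by
    intro h2m
    rcases Nat.even_or_odd q with ⟨c, hc⟩ | ⟨c, hc⟩
    · exfalso
      have h2g : (2:ℕ) ∣ Nat.gcd nγ q := Nat.dvd_gcd h2m ⟨c, by omega⟩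
      rw [hcopm] at h2g
      omega
    · omega
  have h8 : 8 ∣ nγ → 4 ∣ e := by
    intro h8m
    have h2r : 2 ∣ r := by
      rw [hr]
      exact Finset.dvd_prod_of_mem _
        (Nat.mem_primeFactors.mpr ⟨Nat.prime_two, dvd_trans (by norm_num) h8m, hm0.ne'⟩)
    have hqρodd : q ^ ρ % 2 = 1 := by
      have h2e : 2 ∣ q ^ ρ - 1 := dvd_trans h2r hrq
      have h1 : 1 ≤ q ^ ρ := Nat.one_le_pow _ _ (by omega)
      rcases h2e with ⟨c, hc⟩; omega
    rcases hωdef with hcase | ⟨hcase, h3, _⟩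
    · -- ω = ρ, then q^ρ % 4 ≠ 3, so q^ρ ≡ 1 mod 4
      have hne3 : ¬ (q ^ orderOf ((q : ℕ) : ZMod r) % 4 = 3 ∧ 8 ∣ nγ) := by
        intro hcond
        rw [hω, if_pos hcond] at hcase
        omega
      have hne3' : ¬ (q ^ ρ % 4 = 3) := fun h3 => hne3 ⟨h3, h8m⟩
      have : q ^ ρ % 4 = 1 := by omega
      have h4 : 4 ∣ q ^ ρ - 1 := by
        have h1 : 1 ≤ q ^ ρ := Nat.one_le_pow _ _ (by omega)
        omega
      rw [he, hcase]
      exact h4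
    · -- ω = 2ρ : 4 ∣ q^ρ + 1 ∣ q^(2ρ) - 1
      have h4 : 4 ∣ q ^ ρ + 1 := by omega
      have hfacgen : ∀ a : ℕ, 1 ≤ a → a * a - 1 = (a - 1) * (a + 1) := by
        intro a ha
        rcases Nat.exists_eq_add_of_le ha with ⟨b, hb⟩
        subst hb
        have hx1 : 1 + b - 1 = b := by omega
        have hx2 : (1 + b) * (1 + b) - 1 = b * (b + 2) := by
          have hx3 : (1 + b) * (1 + b) = b * (b + 2) + 1 := by ring
          omega
        rw [hx1, hx2]
        ring
      have hfac : q ^ (2 * ρ) - 1 = (q ^ ρ - 1) * (q ^ ρ + 1) := by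
        have h1 : 1 ≤ q ^ ρ := Nat.one_le_pow _ _ (by omega)
        have h2 : q ^ (2 * ρ) = q ^ ρ * q ^ ρ := by
          rw [two_mul, pow_add]
        rw [h2, hfacgen _ h1]
      rw [he, hcase, hfac]
      exact Dvd.dvd.mul_left h4 _
  set g := nγ.gcd e with hg
  have hgd : g ∣ nγ := Nat.gcd_dvd_left _ _
  have hge : g ∣ e := Nat.gcd_dvd_right _ _
  have hgpos : 0 < g := Nat.gcd_pos_of_pos_left e hm0
  -- ω ∣ τ'
  have hqτ1 : nγ ∣ q ^ τ' - 1 := by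
    have h1 : ((q ^ τ' : ℕ) : ZMod nγ) = ((1:ℕ) : ZMod nγ) := by
      rw [← hucast, pow_orderOf_eq_one]; push_cast; ring
    exact (Nat.modEq_iff_dvd' (Nat.one_le_pow _ _ (by omega))).mp
      ((ZMod.natCast_eq_natCast_iff _ _ _).mp h1).symm
  have hρdvd_of_dvd : ∀ s : ℕ, nγ ∣ q ^ s - 1 → ρ ∣ s := by
    intro s hs
    have h1 : q ^ s ≡ 1 [MOD r] := by
      have := dvd_trans hrm hs
      exact ((Nat.modEq_iff_dvd' (Nat.one_le_pow _ _ (by omega))).mpr this).symm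
    have h2 : ((q : ℕ) : ZMod r) ^ s = 1 := by
      have := (ZMod.natCast_eq_natCast_iff _ _ _).mpr h1
      push_cast at this
      simpa using this
    exact orderOf_dvd_of_pow_eq_one h2
  have hdouble : ∀ s : ℕ, nγ ∣ q ^ s - 1 → ω ∣ s := by
    intro s hs
    have hρs : ρ ∣ s := hρdvd_of_dvd s hs
    rcases hωdef with hcase | ⟨hcase, h3, h8m⟩
    · rw [hcase]; exact hρs
    · rcases hρs with ⟨c, hc⟩
      have h4m : 4 ∣ nγ := dvd_trans (by norm_num) h8m
      have h4s : q ^ s ≡ 1 [MOD 4] := by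
        have h1 : 1 ≤ q ^ s := Nat.one_le_pow _ _ (by omega)
        exact ((Nat.modEq_iff_dvd' h1).mpr (dvd_trans h4m hs)).symm
      have hceven : Even c := by
        refine med_m4 h3 ?_
        rw [← pow_mul, ← hc]
        exact h4s
      rcases hceven with ⟨c', hc'⟩
      exact ⟨c', by rw [hcase, hc, hc']; ring⟩
  have hωτ' : ω ∣ τ' := hdouble τ' hqτ1
  -- order of q^ω mod nγ
  have hord1 : orderOf (((e + 1 : ℕ)) : ZMod nγ) = nγ / g := med_order hm0 hepos hrade h8
  have hord2 : orderOf (((e + 1 : ℕ)) : ZMod nγ) = τ' / ω := by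
    have hcoe : ((u ^ ω : (ZMod nγ)ˣ) : ZMod nγ) = (((e + 1 : ℕ)) : ZMod nγ) := by
      rw [he1]; exact hucast ω
    rw [← hcoe, orderOf_units, orderOf_pow, ← hτ', Nat.gcd_eq_right hωτ']
  have hdiveq : nγ / g = τ' / ω := by rw [← hord1, hord2]
  have hkey : g * τ' = nγ * ω := by
    have h1 : nγ = g * (nγ / g) := (Nat.mul_div_cancel' hgd).symm
    have h2 : τ' = ω * (τ' / ω) := (Nat.mul_div_cancel' hωτ').symm
    calc g * τ' = g * (ω * (τ' / ω)) := by rw [← h2]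
      _ = g * (ω * (nγ / g)) := by rw [← hdiveq]
      _ = (g * (nγ / g)) * ω := by ring
      _ = nγ * ω := by rw [← h1]
  set N' := n / nγ with hN'
  have hNpos : 0 < N' := Nat.div_pos (Nat.le_of_dvd hn hmn) hm0
  have hNn : N' * nγ = n := Nat.div_mul_cancel hmn
  have hd0 : n * ω / τ = N' * g := by
    rw [hτeq]
    have h1 : n * ω = (N' * g) * τ' := by
      calc n * ω = N' * (nγ * ω) := by rw [← hNn]; ring
        _ = N' * (g * τ') := by rw [← hkey]
        _ = (N' * g) * τ' := by ring
    rw [h1, Nat.mul_div_cancel _ hτ'pos]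
  -- structure of γ.val
  have hG : γ = ((γ.val : ℕ) : ZMod n) := (ZMod.natCast_zmod_val γ).symm
  have hgcdval : n.gcd γ.val = N' := by
    have h1 : nγ = n / n.gcd γ.val := by
      rw [hnγ]
      conv_lhs => rw [hG]
      exact ZMod.addOrderOf_coe _ hn.ne'
    rw [hN', h1, Nat.div_div_self (Nat.gcd_dvd_left n γ.val) hn.ne']
  have hNG : N' ∣ γ.val := hgcdval ▸ Nat.gcd_dvd_right n γ.val
  -- pointwise rewriting of the subcoset elements
  have hpt : ∀ i k : ℕ, γ * (q : ZMod n) ^ i * ((q : ZMod n) ^ ω) ^ k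
      = γ * (q : ZMod n) ^ (i + ω * k) := by
    intro i k; rw [pow_add, ← pow_mul]; ring
  have hSrange : ∀ i : ℕ,
      {x : ZMod n | ∃ j : ℕ, x = γ * (q : ZMod n) ^ i * ((q : ZMod n) ^ ω) ^ j}
      = Set.range (fun j => γ * (q : ZMod n) ^ (i + ω * j)) := by
    intro i; ext x
    simp only [Set.mem_setOf_eq, Set.mem_range]
    constructor
    · rintro ⟨j, rfl⟩; exact ⟨j, (hpt i j).symm⟩
    · rintro ⟨j, rfl⟩; exact ⟨j, (hpt i j).symm⟩
  have hTpos : 0 < τ' / ω := Nat.div_pos (Nat.le_of_dvd hτ'pos hωτ') hωpos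
  have hτω_mul : ω * (τ' / ω) = τ' := Nat.mul_div_cancel' hωτ'
  have hfi : ∀ i a b : ℕ, γ * (q : ZMod n) ^ (i + ω * a) = γ * (q : ZMod n) ^ (i + ω * b)
      ↔ a ≡ b [MOD τ' / ω] := by
    intro i a b
    rw [hbr]
    constructor
    · intro h
      have h2 := Nat.ModEq.add_left_cancel' i h
      rw [← hτω_mul] at h2
      exact (med_modeq_cancel hωpos).mp h2
    · intro h
      refine Nat.ModEq.add_left i ?_
      rw [← hτω_mul]
      exact (med_modeq_cancel hωpos).mpr h
  have hcardSi : ∀ i : ℕ,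
      ({x : ZMod n | ∃ j : ℕ, x = γ * (q : ZMod n) ^ i * ((q : ZMod n) ^ ω) ^ j}).ncard
      = τ' / ω := by
    intro i
    rw [hSrange i]
    exact med_card_range _ _ hTpos (hfi i)
  have hNd0 : N' * g ∣ n := by
    rw [← hNn]
    exact mul_dvd_mul_left N' hgd
  have hn_div : n / (N' * g) = τ' / ω := by
    rw [← hNn, ← Nat.mul_div_mul_left nγ g hNpos] at *
    rw [← hdiveq]
  refine ⟨?_, ?_, ?_, ?_, ?_, ?_, ?_⟩
  · rw [hτeq]; exact hωτ'
  · rw [hd0]; exact Nat.mul_pos hNpos hgpos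
  · rw [hd0]; exact hNd0
  · -- equal-difference sets
    intro i hi
    refine ⟨γ * (q : ZMod n) ^ i, ?_⟩
    rw [hd0]
    refine Set.eq_of_subset_of_ncard_le ?_ ?_ (Set.toFinite _)
    · rintro x ⟨j, rfl⟩
      set c := q ^ i * (q ^ (ω * j) - 1) with hc
      have hone : 1 ≤ q ^ (ω * j) := Nat.one_le_pow _ _ (by omega)
      have hgc : g ∣ c := by
        refine Dvd.dvd.mul_left ?_ _
        exact hge.trans (he ▸ hpowdvd ω (ω * j) ⟨j, rfl⟩)
      set z := ((γ.val * c : ℕ) : ZMod n) with hz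
      have hzmem : z ∈ (AddSubgroup.closure {((N' * g : ℕ) : ZMod n)} :
          AddSubgroup (ZMod n)) := by
        rw [med_mem_closure hNd0]
        rw [hz, ZMod.val_natCast]
        rw [Nat.dvd_mod_iff hNd0]
        exact mul_dvd_mul hNG hgc
      refine ⟨z, hzmem, ?_⟩
      show γ * (q : ZMod n) ^ i + z = _
      rw [hz, hc]
      push_cast [hone]
      rw [hpt]
      push_cast
      rw [pow_add, ← hG]
      ring
    · rw [Set.ncard_image_of_injective _ (add_right_injective _), hcardSi i,
        med_card_closure hn hNd0, hn_div]
  · -- disjointness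
    intro i hi j hj hij
    rw [Set.disjoint_left]
    rintro x ⟨k, rfl⟩ ⟨l, hl⟩
    rw [hpt, hpt] at hl
    have hmod := ((hbr _ _).mp hl).of_dvd hωτ'
    unfold Nat.ModEq at hmod
    rw [Nat.add_mul_mod_self_left, Nat.add_mul_mod_self_left,
      Nat.mod_eq_of_lt hi, Nat.mod_eq_of_lt hj] at hmod
    exact hij hmod
  · -- union
    rw [hC]
    ext x
    simp only [Set.mem_setOf_eq, Set.mem_iUnion, Finset.mem_range]
    constructor
    · rintro ⟨a, rfl⟩
      refine ⟨a % ω, Nat.mod_lt _ hωpos, a / ω, ?_⟩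
      rw [hpt, Nat.mod_add_div a ω]
    · rintro ⟨i, hi, k, rfl⟩
      exact ⟨i + ω * k, hpt i k⟩
  · -- coarsest
    intro d hdpos hdn hdC
    have hq0 : 0 < q := by omega
    set w := γ.val / N' with hwdef
    have hGw : γ.val = N' * w := (Nat.mul_div_cancel' hNG).symm
    have hwco : Nat.Coprime nγ w := by
      have h1 : Nat.gcd (N' * nγ) (N' * w) = N' * 1 := by
        rw [← hGw, hNn, mul_one, hgcdval]
      rw [Nat.gcd_mul_left] at h1
      exact Nat.eq_of_mul_eq_mul_left hNpos h1
    have hγC : γ ∈ C := by rw [hC]; exact ⟨0, by simp⟩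
    have hiter : ∀ k : ℕ, γ + ((k * d : ℕ) : ZMod n) ∈ C := by
      intro k
      induction k with
      | zero => simpa using hγC
      | succ k ih =>
        have hmem : ((d : ℕ) : ZMod n) + (γ + ((k * d : ℕ) : ZMod n)) ∈ C := by
          rw [← hdC]; exact ⟨_, ih, rfl⟩
        have heq : γ + (((k + 1) * d : ℕ) : ZMod n)
            = ((d : ℕ) : ZMod n) + (γ + ((k * d : ℕ) : ZMod n)) := by push_cast; ring
        rw [heq]; exact hmem
    have hstep : ∀ k : ℕ, ∃ a : ℕ,
        (n : ℤ) ∣ (γ.val : ℤ) * ((q : ℤ) ^ a - 1) - ((k : ℤ) * d) := by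
      intro k
      have hmem := hiter k
      rw [hC] at hmem
      obtain ⟨a, ha⟩ := hmem
      refine ⟨a, ?_⟩
      have hγv : ((γ.val : ℕ) : ZMod n) = γ := ZMod.natCast_zmod_val γ
      rw [← ZMod.intCast_zmod_eq_zero_iff_dvd]
      push_cast [hγv]
      push_cast at ha
      linear_combination -ha
    have hN'd : N' ∣ d := by
      obtain ⟨a, ha⟩ := hstep 1
      have h1 : (N' : ℤ) ∣ (n : ℤ) := Int.natCast_dvd_natCast.mpr ⟨nγ, hNn.symm⟩
      have h2 : (N' : ℤ) ∣ (γ.val : ℤ) := Int.natCast_dvd_natCast.mpr hNG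
      have h3 := dvd_sub (h2.mul_right ((q : ℤ) ^ a - 1)) (h1.trans ha)
      have h4 : (N' : ℤ) ∣ (d : ℤ) := by
        have e3 : (γ.val : ℤ) * ((q : ℤ) ^ a - 1) - ((γ.val : ℤ) * ((q : ℤ) ^ a - 1) - ((1 : ℕ) : ℤ) * d) = d := by push_cast; ring
        rwa [e3] at h3
      exact_mod_cast h4
    set d' := d / N' with hd'def
    have hdd' : d = N' * d' := (Nat.mul_div_cancel' hN'd).symm
    have hd'pos : 0 < d' := by
      rcases Nat.eq_zero_or_pos d' with h | h
      · rw [h, mul_zero] at hdd'; omega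
      · exact h
    have hd'm : d' ∣ nγ := by
      have h1 : N' * d' ∣ N' * nγ := by rw [← hdd', hNn]; exact hdn
      exact (mul_dvd_mul_iff_left hNpos.ne').mp h1
    -- the key hypothesis: every residue 1 + l d' is a power of q mod nγ
    have hH1 : ∀ l : ℕ, ∃ a : ℕ, (1 + l * d' : ℕ) ≡ q ^ a [MOD nγ] := by
      intro l
      obtain ⟨a, ha⟩ := hstep (l * w)
      refine ⟨a, ?_⟩
      rw [Nat.modEq_iff_dvd]
      have hfact : (γ.val : ℤ) * ((q : ℤ) ^ a - 1) - (((l * w : ℕ) : ℤ) * d)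
          = (N' : ℤ) * ((w : ℤ) * ((q : ℤ) ^ a - ((1 + l * d' : ℕ) : ℤ))) := by
        rw [hGw, hdd']; push_cast; ring
      rw [hfact] at ha
      have hnz : (n : ℤ) = (N' : ℤ) * (nγ : ℤ) := by exact_mod_cast hNn.symm
      rw [hnz] at ha
      have h5 : (nγ : ℤ) ∣ (w : ℤ) * ((q : ℤ) ^ a - ((1 + l * d' : ℕ) : ℤ)) :=
        (mul_dvd_mul_iff_left (by exact_mod_cast hNpos.ne' : (N' : ℤ) ≠ 0)).mp ha
      have h6 := (Nat.isCoprime_iff_coprime.mpr hwco).dvd_of_dvd_mul_left h5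
      push_cast at h6 ⊢
      exact h6
    have hraddq : ∀ p : ℕ, p.Prime → p ∣ nγ → p ∣ d' := by
      intro p pp hpm
      by_contra hnd
      have hcop : Nat.Coprime d' p := ((Nat.Prime.coprime_iff_not_dvd pp).mpr hnd).symm
      obtain ⟨c, -, hc⟩ := Nat.exists_mul_mod_eq_one_of_coprime hcop pp.one_lt
      obtain ⟨a, ha⟩ := hH1 (c * (p - 1))
      have hdc : d' * c ≡ 1 [MOD p] := by
        show d' * c % p = 1 % p
        rw [hc, Nat.mod_eq_of_lt pp.one_lt]
      have h2 : (d' * c) * (p - 1) ≡ 1 * (p - 1) [MOD p] := hdc.mul_right _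
      have h3 : 1 + (c * (p - 1)) * d' ≡ 1 + 1 * (p - 1) [MOD p] :=
        Nat.ModEq.add_left 1 (by rw [show (c * (p - 1)) * d' = (d' * c) * (p - 1) by ring]; exact h2)
      have h4 : 1 + 1 * (p - 1) = p := by have := pp.one_lt; omega
      have hmodp : (1 + (c * (p - 1)) * d') ≡ 0 [MOD p] := by
        calc (1 + (c * (p - 1)) * d') ≡ 1 + 1 * (p - 1) [MOD p] := h3
          _ = p := h4
          _ ≡ 0 [MOD p] := Nat.modEq_zero_iff_dvd.mpr dvd_rfl
      have hqa : q ^ a ≡ 0 [MOD p] := (ha.of_dvd hpm).symm.trans hmodp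
      have hpq : p ∣ q :=
        pp.dvd_of_dvd_pow (Nat.modEq_zero_iff_dvd.mp hqa)
      have hpg : p ∣ Nat.gcd nγ q := Nat.dvd_gcd hpm hpq
      rw [hcopm] at hpg
      exact pp.one_lt.ne' (Nat.dvd_one.mp hpg)
    have hrd' : r ∣ d' := by
      rw [hr]
      refine Finset.prod_primes_dvd _ ?_ ?_
      · intro p hp; exact (Nat.prime_of_mem_primeFactors hp).prime
      · intro p hp;
        exact hraddq p (Nat.prime_of_mem_primeFactors hp) (Nat.dvd_of_mem_primeFactors hp)
    set t := orderOf ((q : ℕ) : ZMod d') with htdef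
    have hcoqd' : Nat.Coprime q d' := (Nat.Coprime.coprime_dvd_left hd'm hcopm).symm
    haveI : NeZero d' := ⟨hd'pos.ne'⟩
    have htu : t = orderOf (ZMod.unitOfCoprime q hcoqd') := by
      rw [htdef, ← orderOf_units, ZMod.coe_unitOfCoprime]
    have htpos : 0 < t := htu ▸ orderOf_pos _
    have hd'qt : d' ∣ q ^ t - 1 :=
      (med_cast_pow_eq_one_iff hq0 t).mp (pow_orderOf_eq_one _)
    have htτ : t ∣ τ' := by
      rw [htdef, orderOf_dvd_iff_pow_eq_one, med_cast_pow_eq_one_iff hq0]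
      exact hd'm.trans hqτ1
    have hωt : ω ∣ t := by
      have hρt : ρ ∣ t := by
        rw [hρ, orderOf_dvd_iff_pow_eq_one, med_cast_pow_eq_one_iff hq0]
        exact hrd'.trans hd'qt
      rcases hωdef with hcase | ⟨hcase, h3, h8m⟩
      · rw [hcase]; exact hρt
      · rcases hρt with ⟨c, hcρ⟩
        by_cases h4d : 4 ∣ d'
        · have h4t : q ^ t ≡ 1 [MOD 4] :=
            ((Nat.modEq_iff_dvd' (Nat.one_le_pow _ _ hq0)).mpr (h4d.trans hd'qt)).symm
          have hceven : Even c := med_m4 h3 (by rw [← pow_mul, ← hcρ]; exact h4t)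
          rcases hceven with ⟨c', hc'⟩
          exact ⟨c', by rw [hcase, hcρ, hc']; ring⟩
        · exfalso
          have h2d' : 2 ∣ d' := hraddq 2 Nat.prime_two (dvd_trans (by norm_num) h8m)
          obtain ⟨u', hu'⟩ := h2d'
          have hu'odd : u' % 2 = 1 := by
            rcases Nat.even_or_odd u' with ⟨c2, hc2⟩ | ⟨c2, hc2⟩
            · exfalso; exact h4d ⟨c2, by omega⟩
            · omega
          have hsq : u' * u' ≡ 1 [MOD 8] := by
            have h := med_pow8 hu'odd 2
            norm_num at h
            rw [pow_two] at h
            exact h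
          have h3mod : (1 + u' * d') % 8 = 3 := by
            have h2 : 2 * (u' * u') ≡ 2 * 1 [MOD 8] := hsq.mul_left 2
            unfold Nat.ModEq at h2
            rw [hu', show u' * (2 * u') = 2 * (u' * u') by ring]
            omega
          have h5mod : (1 + d' * d') % 8 = 5 := by
            have h2 : 4 * (u' * u') ≡ 4 * 1 [MOD 8] := hsq.mul_left 4
            unfold Nat.ModEq at h2
            rw [hu', show (2 * u') * (2 * u') = 4 * (u' * u') by ring]
            omega
          obtain ⟨a, ha3⟩ := hH1 u'
          obtain ⟨b, hb5⟩ := hH1 d'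
          have hq3 : q ^ a ≡ 3 [MOD 8] := by
            have h' := ha3.of_dvd h8m
            unfold Nat.ModEq at h' ⊢
            omega
          have hq5 : q ^ b ≡ 5 [MOD 8] := by
            have h' := hb5.of_dvd h8m
            unfold Nat.ModEq at h' ⊢
            omega
          exact med_38 (hqodd8 (dvd_trans (by norm_num) h8m)) hq3 hq5
    -- counting: the set {x ≡ 1 mod d'} equals the powers of q^t
    set fA : ℕ → ZMod nγ := fun l => ((1 + l * d' : ℕ) : ZMod nγ) with hfA
    set fQ : ℕ → ZMod nγ := fun k => (((q : ℕ) : ZMod nγ) ^ t) ^ k with hfQ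
    have hmd' : nγ = d' * (nγ / d') := (Nat.mul_div_cancel' hd'm).symm
    have hτt : τ' = t * (τ' / t) := (Nat.mul_div_cancel' htτ).symm
    have hndpos : 0 < nγ / d' := Nat.div_pos (Nat.le_of_dvd hm0 hd'm) hd'pos
    have hτtpos : 0 < τ' / t := Nat.div_pos (Nat.le_of_dvd hτ'pos htτ) htpos
    have hfAiff : ∀ a b : ℕ, fA a = fA b ↔ a ≡ b [MOD nγ / d'] := by
      intro a b
      rw [hfA]
      dsimp only
      rw [ZMod.natCast_eq_natCast_iff]
      constructor
      · intro h
        have h2 := Nat.ModEq.add_left_cancel' 1 h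
        rw [show a * d' = d' * a by ring, show b * d' = d' * b by ring] at h2
        rw [hmd'] at h2
        exact (med_modeq_cancel hd'pos).mp h2
      · intro h
        refine Nat.ModEq.add_left 1 ?_
        rw [show a * d' = d' * a by ring, show b * d' = d' * b by ring, hmd']
        exact (med_modeq_cancel hd'pos).mpr h
    have hfQiff : ∀ a b : ℕ, fQ a = fQ b ↔ a ≡ b [MOD τ' / t] := by
      intro a b
      rw [hfQ]
      dsimp only
      rw [← pow_mul, ← pow_mul,
        show ((q : ℕ) : ZMod nγ) ^ (t * a) = ((q ^ (t * a) : ℕ) : ZMod nγ) by push_cast; ring,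
        show ((q : ℕ) : ZMod nγ) ^ (t * b) = ((q ^ (t * b) : ℕ) : ZMod nγ) by push_cast; ring,
        ZMod.natCast_eq_natCast_iff, hqq]
      constructor
      · intro h
        rw [hτt] at h
        exact (med_modeq_cancel htpos).mp h
      · intro h
        rw [hτt]
        exact (med_modeq_cancel htpos).mpr h
    have hAQT : Set.range fA = Set.range fQ := by
      apply Set.Subset.antisymm
      · rintro x ⟨l, rfl⟩
        obtain ⟨a, ha⟩ := hH1 l
        have hxa : fA l = ((q : ℕ) : ZMod nγ) ^ a := by
          rw [hfA]; dsimp only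
          rw [show ((q : ℕ) : ZMod nγ) ^ a = ((q ^ a : ℕ) : ZMod nγ) by push_cast; ring]
          exact (ZMod.natCast_eq_natCast_iff _ _ _).mpr ha
        have hta : t ∣ a := by
          rw [htdef, orderOf_dvd_iff_pow_eq_one]
          have hmap : ((1 + l * d' : ℕ) : ZMod d') = ((q ^ a : ℕ) : ZMod d') :=
            (ZMod.natCast_eq_natCast_iff _ _ _).mpr (ha.of_dvd hd'm)
          have hleft : ((1 + l * d' : ℕ) : ZMod d') = 1 := by
            push_cast [ZMod.natCast_self]; ring
          rw [show ((q : ℕ) : ZMod d') ^ a = ((q ^ a : ℕ) : ZMod d') by push_cast; ring,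
            ← hmap, hleft]
        obtain ⟨c, rfl⟩ := hta
        refine ⟨c, ?_⟩
        rw [hfQ]; dsimp only
        rw [← pow_mul, ← hxa]
      · rintro x ⟨k, rfl⟩
        have hd'tk : d' ∣ q ^ (t * k) - 1 := hd'qt.trans (hpowdvd t (t * k) ⟨k, rfl⟩)
        obtain ⟨c, hc⟩ := hd'tk
        have h1tk : 1 ≤ q ^ (t * k) := Nat.one_le_pow _ _ hq0
        have hc' : q ^ (t * k) - 1 = c * d' := by rw [hc]; ring
        have h1 : 1 + c * d' = q ^ (t * k) := by omega
        refine ⟨c, ?_⟩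
        rw [hfA, hfQ]; dsimp only
        rw [h1, ← pow_mul]
        push_cast; ring
    have hcnt : nγ * t = τ' * d' := by
      have h1 : nγ / d' = τ' / t := by
        rw [← med_card_range fA (nγ / d') hndpos hfAiff,
          ← med_card_range fQ (τ' / t) hτtpos hfQiff, hAQT]
      calc nγ * t = d' * (nγ / d') * t := by rw [← hmd']
        _ = d' * (τ' / t) * t := by rw [h1]
        _ = t * (τ' / t) * d' := by ring
        _ = τ' * d' := by rw [← hτt]
    have hgd' : g ∣ d' := by
      have h2 : g * τ' ∣ d' * τ' := by
        rw [hkey]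
        calc nγ * ω ∣ nγ * t := mul_dvd_mul_left nγ hωt
          _ = τ' * d' := hcnt
          _ = d' * τ' := by ring
      exact (mul_dvd_mul_iff_right hτ'pos.ne').mp h2
    rw [hd0, hdd']
    exact mul_dvd_mul_left N' hgd'
end

section
/- Let K be a field containing a primitive n-th root of unity ζ, T a nonempty finite subset of ZMod n, k a positive integer, and suppose f_T = ∏_{γ ∈ T}(X − ζ^{γ̃}) factors as a product of binomials of the same degree: f_T = ∏_{i ∈ I} (X^k − c_i) for some finite family (c_i)_{i ∈ I} of elements of K. Then k divides n and the image of n/k in ZMod n satisfies (n/k) + T = T; that is, T admits a multiple equal-difference representation with common difference n/k. -/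
/-!
The roots `ζ ^ γ` of `f_T` are distinct `n`-th roots of unity, so `f_T ∣ X ^ n - 1`, and hence
every binomial factor `X ^ k - c` divides `X ^ n - 1`. Modulo `X ^ k - c` we have
`X ^ n ≡ c ^ (n / k) * X ^ (n % k)`, a remainder of degree `< k` that can only vanish if
`k ∣ n`. Then `ω = ζ ^ (n / k)` satisfies `ω ^ k = 1`, so `z ↦ ω * z` permutes the roots of
each `X ^ k - c i`, hence the root set `{ζ ^ γ | γ ∈ T}` of `f_T`; on exponents this is
`γ ↦ n / k + γ`.
-/

open Polynomial

namespace Polynomial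

theorem dvd_of_X_pow_sub_C_dvd_X_pow_sub_one {R : Type*} [CommRing R] [IsDomain R] {k n : ℕ}
    (hk : 0 < k) {c : R} (h : X ^ k - C c ∣ X ^ n - 1) : k ∣ n := by
  have hreduce : X ^ k - C c ∣ X ^ n - C (c ^ (n / k)) * X ^ (n % k) := by
    have : X ^ n - C (c ^ (n / k)) * X ^ (n % k) =
        ((X ^ k) ^ (n / k) - C c ^ (n / k)) * X ^ (n % k) := by
      rw [sub_mul, ← pow_mul, ← pow_add, map_pow, Nat.div_add_mod]
    rw [this]
    exact (sub_dvd_pow_sub_pow _ _ _).mul_right _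
  have hrem : C (c ^ (n / k)) * X ^ (n % k) - 1 = 0 := by
    have hdvd := dvd_sub h hreduce
    rw [sub_sub_sub_cancel_left] at hdvd
    refine eq_zero_of_dvd_of_degree_lt hdvd ?_
    rw [degree_X_pow_sub_C hk]
    exact (degree_sub_le _ _).trans_lt (max_lt ((degree_C_mul_X_pow_le _ _).trans_lt
      (by exact_mod_cast Nat.mod_lt n hk)) (by simpa using hk))
  refine Nat.dvd_of_mod_eq_zero (by_contra fun hr => ?_)
  simpa [coeff_C_mul_X_pow, Ne.symm hr] using congrArg (coeff · 0) hrem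

theorem prod_X_sub_C_dvd_of_isRoot {K ι : Type*} [Field K] {s : Finset ι} {f : ι → K}
    (hf : Function.Injective f) {p : K[X]} (hp : ∀ i ∈ s, p.IsRoot (f i)) :
    ∏ i ∈ s, (X - C (f i)) ∣ p :=
  Finset.prod_dvd_of_coprime (fun _ _ _ _ hij => pairwise_coprime_X_sub_C hf hij)
    fun i hi => dvd_iff_isRoot.mpr (hp i hi)

theorem isRoot_prod_X_sub_C_apply_iff {R ι : Type*} [CommRing R] [IsDomain R] {f : ι → R}
    (hf : Function.Injective f) (s : Finset ι) (a : ι) :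
    (∏ i ∈ s, (X - C (f i))).IsRoot (f a) ↔ a ∈ s := by
  simp only [isRoot_prod, root_X_sub_C, hf.eq_iff, exists_eq_right]

theorem eval_mul_prod_X_pow_sub_C {R ι : Type*} [CommRing R] {k : ℕ} {ω : R} (hω : ω ^ k = 1)
    (s : Finset ι) (c : ι → R) (z : R) :
    eval (ω * z) (∏ i ∈ s, (X ^ k - C (c i))) = eval z (∏ i ∈ s, (X ^ k - C (c i))) := by
  simp [eval_prod, mul_pow, hω]

end Polynomial

namespace ZMod

variable {M : Type*} [Monoid M] {n : ℕ} {ζ : M}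

theorem pow_val_natCast (h : ζ ^ n = 1) (m : ℕ) : ζ ^ (m : ZMod n).val = ζ ^ m := by
  rw [val_natCast, ← pow_eq_pow_mod m h]

theorem pow_val_add [NeZero n] (h : ζ ^ n = 1) (a b : ZMod n) :
    ζ ^ (a + b).val = ζ ^ a.val * ζ ^ b.val := by
  rw [val_add, ← pow_eq_pow_mod _ h, pow_add]

end ZMod

theorem IsPrimitiveRoot.pow_val_injective {M : Type*} [CommMonoid M] {n : ℕ} [NeZero n] {ζ : M}
    (hζ : IsPrimitiveRoot ζ n) : Function.Injective fun γ : ZMod n => ζ ^ γ.val :=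
  fun a b h => ZMod.val_injective n (hζ.pow_inj a.val_lt b.val_lt h)

/-- If `f_T = ∏_{γ ∈ T}(X - ζ^γ̃)` factors as a product of binomials of the same
degree `k > 0`, i.e. `f_T = ∏_{i ∈ I} (X^k - c_i)`, then `k ∣ n` and the image of `n/k` in
`ZMod n` stabilizes `T`: `(n/k) + T = T`. -/
theorem binomial_factorization_gives_med {K : Type*} [Field K]
    (n : ℕ) (hn : 0 < n) (ζ : K) (hζ : IsPrimitiveRoot ζ n)
    (T : Finset (ZMod n)) (hT : T.Nonempty) (k : ℕ) (hk : 0 < k)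
    {ι : Type*} (I : Finset ι) (c : ι → K)
    (hfac : ∏ γ ∈ T, (X - C (ζ ^ γ.val)) = ∏ i ∈ I, (X ^ k - C (c i))) :
    k ∣ n ∧ ((((n / k : ℕ) : ZMod n)) + ·) '' (T : Set (ZMod n)) = (T : Set (ZMod n)) := by
  have : NeZero n := ⟨hn.ne'⟩
  have hroots (γ : ZMod n) :
      (∏ i ∈ I, (X ^ k - C (c i))).IsRoot (ζ ^ γ.val) ↔ γ ∈ T := by
    rw [← hfac, isRoot_prod_X_sub_C_apply_iff hζ.pow_val_injective]
  obtain ⟨γ₀, hγ₀⟩ := hT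
  obtain ⟨i₀, hi₀, -⟩ := (isRoot_prod _ _ _).mp ((hroots γ₀).mpr hγ₀)
  have hfT_dvd : ∏ γ ∈ T, (X - C (ζ ^ γ.val)) ∣ X ^ n - 1 :=
    prod_X_sub_C_dvd_of_isRoot (f := fun γ : ZMod n => ζ ^ γ.val) hζ.pow_val_injective
      fun γ _ => by
        rw [IsRoot, eval_sub, eval_pow, eval_X, eval_one, ← pow_mul, mul_comm, pow_mul,
          hζ.pow_eq_one, one_pow, sub_self]
  have hkn : k ∣ n := dvd_of_X_pow_sub_C_dvd_X_pow_sub_one hk <|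
    (Finset.dvd_prod_of_mem (fun i => X ^ k - C (c i)) hi₀).trans (hfac ▸ hfT_dvd)
  have hω : (ζ ^ (n / k)) ^ k = 1 := by rw [← pow_mul, Nat.div_mul_cancel hkn, hζ.pow_eq_one]
  refine ⟨hkn, Set.map_eq_of_subset (f := addLeftEmbedding _) ?_⟩
  rintro _ ⟨γ, hγ, rfl⟩
  rw [Finset.mem_coe, ← hroots] at hγ ⊢
  rwa [IsRoot, addLeftEmbedding_apply, ZMod.pow_val_add hζ.pow_eq_one,
    ZMod.pow_val_natCast hζ.pow_eq_one, eval_mul_prod_X_pow_sub_C hω]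
end

section
/- Let K be a field containing a primitive n-th root of unity ζ, T a nonempty finite subset of ZMod n, and d a positive divisor of n whose image in ZMod n satisfies d + T = T. Then the number of nonzero coefficients of the polynomial f_T = ∏_{γ ∈ T}(X − ζ^{γ̃}) is at most |T|·d/n + 1 (note that n/d divides |T|, so |T|·d/n is a natural number). -/
/-! Since `γ ↦ ζ ^ γ̃` is an additive character of `ZMod n`, translating `T` by `d` multiplies
every root of `f = f_T` by `ω = ζ ^ d`, a primitive `m`-th root of unity with `m = n / d`. As
`T` is stable under that translation, `f (ω X) = ω ^ |T| f (X)`. Comparing coefficients,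
`ω ^ k = ω ^ |T|` whenever `X ^ k` occurs in `f`, i.e. `k ≡ |T| [MOD m]`; there are only
`|T| / m + 1` such `k` in `[0, |T|]`. -/

open Polynomial Finset
open scoped Pointwise

theorem Nat.card_le_div_add_one_of_modEq {S : Finset ℕ} {N m : ℕ}
    (hS : ∀ k ∈ S, k ≤ N ∧ k ≡ N [MOD m]) : #S ≤ N / m + 1 := by
  have hdvd : ∀ k ∈ S, m ∣ N - k := fun k hk ↦
    (Nat.modEq_iff_dvd' (hS k hk).1).mp (hS k hk).2
  calc #S ≤ #(range (N / m + 1)) := by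
        refine card_le_card_of_injOn (fun k ↦ (N - k) / m) (fun k _ ↦ ?_) fun k hk k' hk' h ↦ ?_
        · exact mem_range_succ_iff.mpr (Nat.div_le_div_right (Nat.sub_le N k))
        · have hsub := congrArg (· * m) h
          simp only [Nat.div_mul_cancel (hdvd k hk), Nat.div_mul_cancel (hdvd k' hk')] at hsub
          have := (hS k hk).1
          have := (hS k' hk').1
          omega
    _ = N / m + 1 := card_range _

namespace Polynomial

theorem card_support_le_of_comp_C_mul_X_eq {R : Type*} [CommSemiring R] [IsCancelMulZero R]
    {p : R[X]} {ω : R} {m : ℕ} (hm : m ≠ 0) (hω : IsPrimitiveRoot ω m)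
    (h : p.comp (C ω * X) = C (ω ^ p.natDegree) * p) : #p.support ≤ p.natDegree / m + 1 := by
  refine Nat.card_le_div_add_one_of_modEq fun k hk ↦ ⟨le_natDegree_of_mem_supp k hk, ?_⟩
  have hcoeff : p.coeff k * ω ^ k = p.coeff k * ω ^ p.natDegree := by
    have := congrArg (coeff · k) h
    simp only [comp_C_mul_X_coeff, coeff_C_mul] at this
    exact this.trans (mul_comm _ _)
  rw [hω.eq_orderOf, ← (hω.isOfFinOrder hm).pow_eq_pow_iff_modEq]
  exact mul_left_cancel₀ (mem_support_iff.mp hk) hcoeff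

theorem prod_X_sub_C_addChar_comp_C_mul_X {G R : Type*} [AddLeftCancelMonoid G] [DecidableEq G]
    [CommRing R] (ψ : AddChar G R) {T : Finset G} {g : G} (hg : g +ᵥ T = T) :
    (∏ γ ∈ T, (X - C (ψ γ))).comp (C (ψ g) * X) = C (ψ g ^ #T) * ∏ γ ∈ T, (X - C (ψ γ)) := by
  calc (∏ γ ∈ T, (X - C (ψ γ))).comp (C (ψ g) * X)
      = ∏ γ ∈ g +ᵥ T, (C (ψ g) * X - C (ψ γ)) := by simp [prod_comp, hg]
    _ = ∏ γ ∈ T, C (ψ g) * (X - C (ψ γ)) := by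
        rw [vadd_finset_def]
        simp only [vadd_eq_add]
        rw [prod_image (add_right_injective g).injOn]
        simp [AddChar.map_add_eq_mul, mul_sub]
    _ = C (ψ g ^ #T) * ∏ γ ∈ T, (X - C (ψ γ)) := by rw [prod_mul_distrib, prod_const, C_pow]

end Polynomial

theorem support_card_le_of_stabilized_general {K : Type*} [Field K]
    (n : ℕ) (hn : 0 < n) (ζ : K) (hζ : IsPrimitiveRoot ζ n)
    (T : Finset (ZMod n))
    (d : ℕ) (hdn : d ∣ n)
    (hstab : (((d : ZMod n)) + ·) '' (T : Set (ZMod n)) = (T : Set (ZMod n))) :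
    (∏ γ ∈ T, (X - C (ζ ^ γ.val))).support.card ≤ T.card * d / n + 1 := by
  have : NeZero n := ⟨hn.ne'⟩
  obtain ⟨m, hm⟩ := hdn
  have hd : 0 < d := Nat.pos_of_mul_pos_right (hm ▸ hn)
  have hm0 : m ≠ 0 := (Nat.pos_of_mul_pos_left (hm ▸ hn)).ne'
  have hdiv (t : ℕ) : t * d / n = t / m := by rw [hm, mul_comm d m, Nat.mul_div_mul_right _ _ hd]
  let ψ := AddChar.zmodChar n hζ.pow_eq_one
  have hscale := prod_X_sub_C_addChar_comp_C_mul_X ψ (g := d) (by exact_mod_cast hstab)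
  rw [← natDegree_finsetProd_X_sub_C_eq_card T ψ, AddChar.zmodChar_apply'] at hscale
  simp only [ψ, AddChar.zmodChar_apply] at hscale
  rw [hdiv, ← natDegree_finsetProd_X_sub_C_eq_card T fun γ ↦ ζ ^ γ.val]
  exact card_support_le_of_comp_C_mul_X_eq hm0 (hζ.pow hn hm) hscale

/-- If `d` is a positive divisor of `n` whose image in `ZMod n` stabilizes the
nonempty finite subset `T`, then the polynomial `f_T = ∏_{γ ∈ T}(X - ζ^γ̃)` has at most
`|T|·d/n + 1` nonzero coefficients. -/
theorem support_card_le_of_stabilized {K : Type*} [Field K]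
    (n : ℕ) (hn : 0 < n) (ζ : K) (hζ : IsPrimitiveRoot ζ n)
    (T : Finset (ZMod n)) (hT : T.Nonempty)
    (d : ℕ) (hd : 0 < d) (hdn : d ∣ n)
    (hstab : (((d : ZMod n)) + ·) '' (T : Set (ZMod n)) = (T : Set (ZMod n))) :
    (∏ γ ∈ T, (X - C (ζ ^ γ.val))).support.card ≤ T.card * d / n + 1 :=
  support_card_le_of_stabilized_general n hn ζ hζ T d hdn hstab
end

section
/- Let F be a finite field of cardinality q, m a positive integer coprime to q, λ a nonzero element of F, and f ∈ F[X] a monic divisor of X^m − λ with deg f < m. Let K be a field extension of F containing a primitive n-th root of unity ζ, where n is a positive integer coprime to q, and let T ⊆ ZMod n be such that the image of f in K[X] equals ∏_{γ ∈ T}(X − ζ^{γ̃}). Suppose d is a positive divisor of n whose image in ZMod n satisfies d + T = T. Then the λ-constacyclic code of length m generated by f contains a nonzero codeword of Hamming weight at most |T|·d/n + 1; concretely, there exists a nonzero polynomial g ∈ F[X] with f ∣ g, deg g < m, and g has at most |T|·d/n + 1 nonzero coefficients. Consequently the Hamming distance of the code satisfies d_H ≤ |T|·d/n + 1. -/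
/-!
Since `d + T = T`, the substitution `X ↦ ζ ^ d X` permutes the linear factors `X - ζ ^ γ` of `f`
up to the scalar `ζ ^ d`, so `f(ζ ^ d X) = ζ ^ (d |T|) f(X)`. Comparing coefficients, and using
that the constant coefficient of `f` is nonzero, `ζ ^ (d i) = 1`, i.e. `n / d ∣ i`, for every
exponent `i` occurring in `f`. So `f` itself is a codeword: a polynomial in `X ^ (n / d)` of
degree `|T| < m`, with at most `|T| / (n / d) + 1` nonzero coefficients.
-/

open Polynomial

namespace Polynomial

section CommRing

variable {R : Type*} [CommRing R]

theorem prod_X_sub_C_comp_C_mul_X {ι : Type*} (s : Finset ι) (r : ι → R) (η : R) (τ : ι → ι)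
    (hτ : Set.BijOn τ s s) (hr : ∀ γ ∈ s, r (τ γ) = η * r γ) :
    (∏ γ ∈ s, (X - C (r γ))).comp (C η * X) = C (η ^ s.card) * ∏ γ ∈ s, (X - C (r γ)) := by
  have hfactor : ∀ γ ∈ s, C η * X - C (r (τ γ)) = C η * (X - C (r γ)) := fun γ hγ => by
    rw [hr γ hγ, C_mul, mul_sub]
  simp only [prod_comp, sub_comp, X_comp, C_comp]
  rw [← Finset.prod_nbij τ hτ.mapsTo hτ.injOn hτ.surjOn fun γ hγ => (hfactor γ hγ).symm,
    Finset.prod_mul_distrib, Finset.prod_const, C_pow]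

theorem card_support_le_natDegree_div_add_one (p : R[X]) {e : ℕ}
    (he : ∀ i ∈ p.support, e ∣ i) : p.support.card ≤ p.natDegree / e + 1 := by
  have hsub : p.support ⊆ (Finset.range (p.natDegree / e + 1)).image (e * ·) := by
    intro i hi
    refine Finset.mem_image.mpr ⟨i / e, ?_, Nat.mul_div_cancel' (he i hi)⟩
    exact Finset.mem_range_succ_iff.mpr (Nat.div_le_div_right (le_natDegree_of_mem_supp _ hi))
  calc p.support.card ≤ ((Finset.range (p.natDegree / e + 1)).image (e * ·)).card :=
        Finset.card_le_card hsub
    _ ≤ p.natDegree / e + 1 := Finset.card_image_le.trans (Finset.card_range _).le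

variable [NoZeroDivisors R]

theorem pow_eq_of_comp_C_mul_X_eq_C_mul {p : R[X]} {a c : R} (hp : p.comp (C a * X) = C c * p)
    {i : ℕ} (hi : p.coeff i ≠ 0) : a ^ i = c := by
  have := congrArg (coeff · i) hp
  simp only [comp_C_mul_X_coeff, coeff_C_mul] at this
  exact mul_left_cancel₀ hi (by rw [this, mul_comm])

theorem dvd_of_mem_support_of_comp_C_mul_X_eq_C_mul {p : R[X]} {η c : R} {e : ℕ}
    (hη : IsPrimitiveRoot η e) (hp : p.comp (C η * X) = C c * p) (h0 : p.coeff 0 ≠ 0)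
    {i : ℕ} (hi : i ∈ p.support) : e ∣ i := by
  have hc : c = 1 := by rw [← pow_eq_of_comp_C_mul_X_eq_C_mul hp h0, pow_zero]
  rw [← hη.pow_eq_one_iff_dvd, ← hc]
  exact pow_eq_of_comp_C_mul_X_eq_C_mul hp (mem_support_iff.mp hi)

end CommRing

end Polynomial

theorem pow_val_natCast_add {M : Type*} [Monoid M] {n : ℕ} [NeZero n] {ζ : M} (hζ : ζ ^ n = 1)
    (d : ℕ) (a : ZMod n) : ζ ^ ((d : ZMod n) + a).val = ζ ^ d * ζ ^ a.val := by
  rw [ZMod.val_add, ZMod.val_natCast, ← pow_eq_pow_mod _ hζ, pow_add, ← pow_eq_pow_mod _ hζ]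

theorem constacyclic_code_low_weight_codeword_general {F K : Type*} [Field F]
    [Field K] [Algebra F K]
    (m : ℕ)
    (f : F[X]) (hdeg : f.natDegree < m)
    (n : ℕ) (hn : 0 < n)
    (ζ : K) (hζ : IsPrimitiveRoot ζ n)
    (T : Finset (ZMod n))
    (hTf : f.map (algebraMap F K) = ∏ γ ∈ T, (X - C (ζ ^ γ.val)))
    (d : ℕ) (hd : 0 < d) (hdn : d ∣ n)
    (hstab : (((d : ZMod n)) + ·) '' (T : Set (ZMod n)) = (T : Set (ZMod n))) :
    ∃ g : F[X], g ≠ 0 ∧ f ∣ g ∧ g.natDegree < m ∧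
      g.support.card ≤ T.card * d / n + 1 := by
  obtain ⟨e, rfl⟩ := hdn
  have : NeZero (d * e) := ⟨hn.ne'⟩
  set P := f.map (algebraMap F K)
  have hcomp : P.comp (C (ζ ^ d) * X) = C ((ζ ^ d) ^ T.card) * P := by
    rw [hTf]
    refine prod_X_sub_C_comp_C_mul_X T _ _ ((d : ZMod (d * e)) + ·) ?_
      fun γ _ => pow_val_natCast_add hζ.pow_eq_one d γ
    have := ((add_right_injective (d : ZMod (d * e))).injOn (s := T)).bijOn_image
    rwa [hstab] at this
  have h0 : P.coeff 0 ≠ 0 := by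
    rw [hTf, coeff_zero_eq_eval_zero, eval_prod, Finset.prod_ne_zero_iff]
    intro γ _
    simp only [eval_sub, eval_X, eval_C, zero_sub, neg_ne_zero]
    exact pow_ne_zero _ (hζ.ne_zero hn.ne')
  have hη : IsPrimitiveRoot (ζ ^ d) e := by
    simpa [hd.ne'] using hζ.pow_of_dvd hd.ne' (dvd_mul_right d e)
  have hdegP : P.natDegree = T.card := by rw [hTf, natDegree_finsetProd_X_sub_C_eq_card]
  have hdiv : T.card * d / (d * e) = T.card / e := by
    rw [Nat.mul_comm T.card d, Nat.mul_div_mul_left _ _ hd]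
  refine ⟨f, fun hf => h0 (by simp [P, hf]), dvd_rfl, hdeg, ?_⟩
  rw [← support_map_of_injective f (algebraMap F K).injective, hdiv, ← hdegP]
  exact card_support_le_natDegree_div_add_one P fun i =>
    dvd_of_mem_support_of_comp_C_mul_X_eq_C_mul hη hcomp h0

/-- Let `F` be a finite field of cardinality `q`, `m` positive coprime to `q`,
`lam ≠ 0` in `F`, and `f` a monic divisor of `X^m - lam` with `deg f < m`. Let `K ⊇ F` contain
a primitive `n`-th root of unity `ζ` (`n` coprime to `q`), and let `T ⊆ ZMod n` be the
defining set of `f`, i.e. the image of `f` in `K[X]` equals `∏_{γ ∈ T}(X - ζ^γ̃)`. If `d` is a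
positive divisor of `n` whose image stabilizes `T`, then the `lam`-constacyclic code of length
`m` generated by `f` contains a nonzero codeword of Hamming weight at most `|T|·d/n + 1`:
there is a nonzero `g ∈ F[X]` with `f ∣ g`, `deg g < m`, and at most `|T|·d/n + 1` nonzero
coefficients. -/
theorem constacyclic_code_low_weight_codeword {F K : Type*} [Field F] [Fintype F]
    [Field K] [Algebra F K] (q : ℕ) (hq : Fintype.card F = q)
    (m : ℕ) (hm : 0 < m) (hmq : Nat.Coprime m q)
    (lam : F) (hlam : lam ≠ 0)
    (f : F[X]) (hmon : f.Monic) (hdvd : f ∣ (X ^ m - C lam)) (hdeg : f.natDegree < m)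
    (n : ℕ) (hn : 0 < n) (hnq : Nat.Coprime n q)
    (ζ : K) (hζ : IsPrimitiveRoot ζ n)
    (T : Finset (ZMod n))
    (hTf : f.map (algebraMap F K) = ∏ γ ∈ T, (X - C (ζ ^ γ.val)))
    (d : ℕ) (hd : 0 < d) (hdn : d ∣ n)
    (hstab : (((d : ZMod n)) + ·) '' (T : Set (ZMod n)) = (T : Set (ZMod n))) :
    ∃ g : F[X], g ≠ 0 ∧ f ∣ g ∧ g.natDegree < m ∧
      g.support.card ≤ T.card * d / n + 1 :=
  constacyclic_code_low_weight_codeword_general m f hdeg n hn ζ hζ T hTf d hd hdn hstab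
end

section
/- Let q be a prime power, n a positive integer coprime to q, and γ a unit of ZMod n. Let τ = ord_n(q) (which equals |c_{n/q}(γ)|), and define ω = 2·ord_{rad(n)}(q) if q^{ord_{rad(n)}(q)} ≡ 3 (mod 4) and 8 ∣ n, and ω = ord_{rad(n)}(q) otherwise. Then ω divides τ and the stabilizer of the cyclotomic coset has cardinality |{a ∈ ZMod n : a + c_{n/q}(γ) = c_{n/q}(γ)}| = τ/ω. (Consequently the arithmetic Singleton bound of any irreducible constacyclic code whose generator polynomial has order n equals ω + 1.) -/
section AUX

open Function

-- binomial expansion, quadratic form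
lemma aux_pow_expand2 (y : ℕ) : ∀ N : ℕ, ∃ B, (1 + y)^N = 1 + N*y + y^2 * B := by
  intro N
  induction N with
  | zero => exact ⟨0, by ring⟩
  | succ N ih =>
    obtain ⟨B, hB⟩ := ih
    exact ⟨B + N + y*B, by rw [pow_succ, hB]; ring⟩

-- binomial expansion, cubic form
lemma aux_pow_expand3 (y : ℕ) : ∀ N : ℕ, ∃ B, (1 + y)^N = 1 + N*y + N.choose 2 * y^2 + y^3 * B := by
  intro N
  induction N with
  | zero => exact ⟨0, by norm_num⟩
  | succ N ih =>
    obtain ⟨B, hB⟩ := ih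
    refine ⟨B + N.choose 2 + y * B, ?_⟩
    rw [pow_succ, hB, Nat.choose_succ_succ, Nat.choose_one_right]
    ring

-- soft LTE step: p^d ∣ Y - 1 → p^(d+1) ∣ Y^p - 1, with Y = 1 + p^d * v
lemma lte_soft_step {p d v : ℕ} (hd : 1 ≤ d) :
    ∃ v', (1 + p^d * v)^p = 1 + p^(d+1) * v' := by
  obtain ⟨e, rfl⟩ := Nat.exists_eq_add_of_le hd
  obtain ⟨B, hB⟩ := aux_pow_expand2 (p^(1+e) * v) p
  refine ⟨v + p^e * v^2 * B, ?_⟩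
  rw [hB]
  ring

lemma lte_soft_chain {p c u : ℕ} (hc : 1 ≤ c) :
    ∀ k, ∃ u', (1 + p^c * u)^(p^k) = 1 + p^(c+k) * u' := by
  intro k
  induction k with
  | zero => exact ⟨u, by norm_num⟩
  | succ k ih =>
    obtain ⟨u', hu'⟩ := ih
    obtain ⟨v', hv'⟩ := lte_soft_step (p := p) (d := c + k) (v := u') (le_trans hc (Nat.le_add_right _ _))
    exact ⟨v', by rw [pow_succ, pow_mul, hu', hv', ← add_assoc]⟩

lemma lte_exact_step {p : ℕ} (hp : p.Prime) {c u : ℕ} (hc : 1 ≤ c) (h2 : p = 2 → 2 ≤ c)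
    (hu : ¬ p ∣ u) :
    ∃ u', (1 + p^c * u)^p = 1 + p^(c+1) * u' ∧ ¬ p ∣ u' := by
  rcases eq_or_ne p 2 with h | hodd
  · subst h
    obtain ⟨e, rfl⟩ := Nat.exists_eq_add_of_le (h2 rfl)
    refine ⟨u + 2^(1+e) * u^2, by ring, ?_⟩
    intro h
    have h2dvd : 2 ∣ 2^(1+e) * u^2 := Dvd.dvd.mul_right (dvd_pow_self 2 (by omega)) _
    exact hu ((Nat.dvd_add_iff_left h2dvd).mpr h)
  · have hody : 2 ∣ p - 1 := by
      obtain ⟨j, hj⟩ := hp.odd_of_ne_two hodd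
      omega
    have hch : p.choose 2 = p * ((p-1)/2) := by
      rw [Nat.choose_two_right, Nat.mul_div_assoc p hody]
    obtain ⟨B, hB⟩ := aux_pow_expand3 (p^c * u) p
    obtain ⟨e, rfl⟩ := Nat.exists_eq_add_of_le hc
    have hndvd : ¬ p ∣ u + p^(1+e) * ((p-1)/2) * u^2 + p^(1+e+e) * u^3 * B := by
      intro h
      have h1 : p ∣ p ^ (1 + e) * ((p - 1) / 2) * u ^ 2 + p ^ (1 + e + e) * u ^ 3 * B :=
        dvd_add (Dvd.dvd.mul_right (Dvd.dvd.mul_right (dvd_pow_self p (by omega)) _) _)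
          (Dvd.dvd.mul_right (Dvd.dvd.mul_right (dvd_pow_self p (by omega)) _) _)
      have h2' := Nat.dvd_sub h h1
      have heq : u + p ^ (1 + e) * ((p - 1) / 2) * u ^ 2 + p ^ (1 + e + e) * u ^ 3 * B
          - (p ^ (1 + e) * ((p - 1) / 2) * u ^ 2 + p ^ (1 + e + e) * u ^ 3 * B) = u := by omega
      rw [heq] at h2'
      exact hu h2'
    exact ⟨u + p^(1+e) * ((p-1)/2) * u^2 + p^(1+e+e) * u^3 * B, by rw [hB, hch]; ring, hndvd⟩

lemma lte_exact_chain {p : ℕ} (hp : p.Prime) {c u : ℕ} (hc : 1 ≤ c) (h2 : p = 2 → 2 ≤ c)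
    (hu : ¬ p ∣ u) :
    ∀ k, ∃ u', (1 + p^c * u)^(p^k) = 1 + p^(c+k) * u' ∧ ¬ p ∣ u' := by
  intro k; induction k with
  | zero => exact ⟨u, by norm_num, hu⟩
  | succ k ih =>
    obtain ⟨u', hu', hnd⟩ := ih
    obtain ⟨v', hv', hnd'⟩ := lte_exact_step hp (c := c + k)
      (le_trans hc (Nat.le_add_right _ _)) (fun h => le_trans (h2 h) (Nat.le_add_right _ _)) hnd
    exact ⟨v', by rw [pow_succ, pow_mul, hu', hv', ← add_assoc], hnd'⟩

lemma cast_pow_eq_one_iff {q k : ℕ} (s : ℕ) (hq : 1 ≤ q) :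
    (q : ZMod k)^s = 1 ↔ k ∣ q^s - 1 := by
  have h1 : 1 ≤ q^s := Nat.one_le_pow _ _ hq
  rw [show ((q : ZMod k)^s : ZMod k) = ((q^s : ℕ) : ZMod k) by push_cast; ring,
    show (1 : ZMod k) = ((1:ℕ) : ZMod k) by push_cast; ring, ZMod.natCast_eq_natCast_iff]
  constructor
  · intro h; exact (Nat.modEq_iff_dvd' h1).mp h.symm
  · intro h; exact ((Nat.modEq_iff_dvd' h1).mpr h).symm

lemma orderOf_cast_exact {p : ℕ} (hp : p.Prime) {X c a : ℕ} (hX : 2 ≤ X)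
    (hc : 1 ≤ c) (h2 : p = 2 → 2 ≤ c) (hdvd : p^c ∣ X - 1) (hnd : ¬ p^(c+1) ∣ X - 1)
    (hca : c < a) : orderOf (X : ZMod (p^a)) = p^(a-c) := by
  obtain ⟨u, hu⟩ := hdvd
  have hX1 : 1 + p^c * u = X := by omega
  have hpu : ¬ p ∣ u := by
    rintro ⟨w, rfl⟩
    exact hnd ⟨w, by rw [hu]; ring⟩
  have hchain := lte_exact_chain hp hc h2 hpu
  have hXs : ∀ k, X ^ (p^k) - 1 = p^(c+k) * Classical.choose (hchain k) := by
    intro k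
    have h := (Classical.choose_spec (hchain k)).1
    rw [← hX1]
    omega
  have hord_dvd : orderOf (X : ZMod (p^a)) ∣ p^(a-c) := by
    rw [orderOf_dvd_iff_pow_eq_one, cast_pow_eq_one_iff _ (by omega), hXs (a-c)]
    exact Dvd.dvd.mul_right (pow_dvd_pow p (by omega)) _
  obtain ⟨j, hj, horder⟩ := (Nat.dvd_prime_pow hp).mp hord_dvd
  have hje : j = a - c := by
    by_contra hne
    have hjlt : j < a - c := by omega
    have h1 : (X : ZMod (p^a))^(p^j) = 1 := by
      rw [← horder]; exact pow_orderOf_eq_one _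
    rw [cast_pow_eq_one_iff _ (by omega), hXs j] at h1
    have h2' : p^(c+j) * p ∣ p^(c+j) * Classical.choose (hchain j) := by
      refine dvd_trans ?_ h1
      rw [← pow_succ]
      exact pow_dvd_pow p (by omega)
    exact (Classical.choose_spec (hchain j)).2
      ((Nat.mul_dvd_mul_iff_left (pow_pos hp.pos _)).mp h2')
  rw [horder, hje]

lemma orderOf_cast_dvd {k l : ℕ} (h : k ∣ l) (q : ℕ) :
    orderOf (q : ZMod k) ∣ orderOf (q : ZMod l) := by
  have := orderOf_map_dvd (ZMod.castHom h (ZMod k)).toMonoidHom (q : ZMod l)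
  simpa using this

lemma orderOf_cast_pos (q k : ℕ) (hk : 0 < k) (hco : Nat.Coprime q k) :
    0 < orderOf (q : ZMod k) := by
  haveI : NeZero k := ⟨hk.ne'⟩
  have hu : IsUnit (q : ZMod k) := (ZMod.isUnit_iff_coprime q k).mpr hco
  rw [← hu.unit_spec, orderOf_units]
  exact orderOf_pos _

lemma two_dvd_of_mod4 {q e F : ℕ} (h3 : q ^ e % 4 = 3) (heF : e ∣ F) (h1 : q ^ F % 4 = 1) :
    2 * e ∣ F := by
  obtain ⟨k, rfl⟩ := heF
  have hqk : q ^ (e*k) % 4 = 3 ^ k % 4 := by rw [pow_mul, Nat.pow_mod, h3]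
  rcases Nat.even_or_odd k with ⟨j, rfl⟩ | ⟨j, rfl⟩
  · exact ⟨j, by ring⟩
  · exfalso
    have h31 : ∀ j : ℕ, 3 ^ (2*j+1) % 4 = 3 := by
      intro j
      induction j with
      | zero => norm_num
      | succ j ih =>
        rw [show 2*(j+1)+1 = (2*j+1)+2 by ring, pow_add, Nat.mul_mod, ih]
        norm_num
    rw [hqk, h31 j] at h1
    exact absurd h1 (by norm_num)

lemma card_coset_powers {M : Type*} [CommMonoid M] (u x : Mˣ) :
    Nat.card {y : M | ∃ i : ℕ, y = ↑u * (x:M)^i} = orderOf (x : M) := by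
  have hset : {y : M | ∃ i : ℕ, y = ↑u * (x:M)^i}
      = (fun y : M => ↑u * y) '' (Units.val '' ((Submonoid.powers x : Set Mˣ))) := by
    ext y
    simp only [Set.mem_setOf_eq, Set.mem_image, SetLike.mem_coe, Submonoid.mem_powers_iff]
    constructor
    · rintro ⟨i, rfl⟩; exact ⟨↑(x^i), ⟨x^i, ⟨i, rfl⟩, rfl⟩, by push_cast; ring⟩
    · rintro ⟨v, ⟨w, ⟨i, rfl⟩, rfl⟩, rfl⟩; exact ⟨i, by push_cast; ring⟩
  rw [hset, Nat.card_image_of_injective ((Units.isUnit u).mul_right_injective),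
    Nat.card_image_of_injective Units.val_injective, orderOf_units, ← Nat.card_submonoidPowers (a := x)]
  exact Nat.card_congr (Equiv.setCongr rfl)

lemma castHom_val' {m n : ℕ} [NeZero n] (h : m ∣ n) (x : ZMod n) :
    (ZMod.castHom h (ZMod m)) x = ((x.val : ℕ) : ZMod m) := by
  conv_lhs => rw [← ZMod.natCast_zmod_val x]
  rw [map_natCast]

lemma card_preimage_castHom {m n : ℕ} (hn : 0 < n) (h : m ∣ n) (D : Set (ZMod m)) :
    Nat.card ((ZMod.castHom h (ZMod m)) ⁻¹' D) = (n / m) * Nat.card D := by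
  haveI : NeZero n := ⟨hn.ne'⟩
  have hm : 0 < m := Nat.pos_of_dvd_of_pos h hn
  haveI : NeZero m := ⟨hm.ne'⟩
  have hmem : ∀ (d : ZMod m) (j : ℕ), ((d.val + m * j : ℕ) : ZMod m) = d := by
    intro d j
    rw [Nat.cast_add, Nat.cast_mul, ZMod.natCast_self, zero_mul, add_zero, ZMod.natCast_zmod_val]
  have hbound : ∀ (d : ZMod m) (j : Fin (n/m)), d.val + m * j.1 < n := by
    intro d j
    have h1 : m * (j.1+1) ≤ m * (n/m) := Nat.mul_le_mul_left m j.2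
    rw [Nat.mul_div_cancel' h, Nat.mul_succ] at h1
    have h2 := d.val_lt
    omega
  have e : ((ZMod.castHom h (ZMod m)) ⁻¹' D) ≃ (Fin (n/m)) × D := by
    refine {
      toFun := fun x => (⟨(x : ZMod n).val / m, Nat.div_lt_div_of_lt_of_dvd h (ZMod.val_lt _)⟩,
        ⟨(ZMod.castHom h (ZMod m)) x.1, x.2⟩)
      invFun := fun jd => ⟨((jd.2.1.val + m * jd.1.1 : ℕ) : ZMod n), by
        simp only [Set.mem_preimage, map_natCast]
        rw [hmem]
        exact jd.2.2⟩
      left_inv := ?_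
      right_inv := ?_ }
    · intro x
      apply Subtype.ext
      simp only
      rw [castHom_val', ZMod.val_natCast]
      rw [Nat.mod_add_div, ZMod.natCast_zmod_val]
    · rintro ⟨j, d⟩
      have hval : (((d.1.val + m * j.1 : ℕ) : ZMod n)).val = d.1.val + m * j.1 :=
        ZMod.val_cast_of_lt (hbound d.1 j)
      refine Prod.ext ?_ ?_
      · apply Fin.ext
        simp only
        rw [hval, Nat.add_mul_div_left _ _ hm, Nat.div_eq_of_lt d.1.val_lt, Nat.zero_add]
      · apply Subtype.ext
        simp only [map_natCast]
        rw [hmem]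
  rw [Nat.card_congr e, Nat.card_prod, Nat.card_eq_fintype_card, Fintype.card_fin]
lemma soft_pow_dvd {p c X : ℕ} (hX : 1 ≤ X) (hc : 1 ≤ c) (hdvd : p^c ∣ X - 1) (k : ℕ) :
    p^(c+k) ∣ X^(p^k) - 1 := by
  obtain ⟨u, hu⟩ := hdvd
  have hX1 : 1 + p^c * u = X := by omega
  obtain ⟨u', hu'⟩ := lte_soft_chain hc k
  rw [← hX1, hu']
  simp

lemma pow_sub_one_dvd_pow_sub_one (X d M : ℕ) (h : d ∣ M) : X^d - 1 ∣ X^M - 1 := by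
  obtain ⟨c, rfl⟩ := h
  rw [pow_mul]
  simpa using Nat.sub_dvd_pow_sub_pow (X^d) 1 c

lemma factorization_prod_pow_apply (s : Finset ℕ) (hs : ∀ p ∈ s, p.Prime) (f : ℕ → ℕ)
    {p : ℕ} (hp : p ∈ s) :
    (∏ q ∈ s, q ^ f q).factorization p = f p := by
  rw [Nat.factorization_prod (fun q hq => pow_ne_zero _ (hs q hq).pos.ne')]
  rw [Finset.sum_apply']
  rw [Finset.sum_eq_single p]
  · rw [(hs p hp).factorization_pow, Finsupp.single_eq_same]
  · intro b hb hbp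
    rw [(hs b hb).factorization_pow, Finsupp.single_eq_of_ne' hbp]
  · intro h; exact absurd hp h

end AUX

/-- For a prime power `q`, `n` coprime to `q`, and a unit `γ` of `ZMod n`, with
`τ = ord_n(q) = |c_{n/q}(γ)|` and `ω` as usual, `ω` divides `τ` and the stabilizer of the
cyclotomic coset `c_{n/q}(γ)` has cardinality `τ/ω` (hence the arithmetic Singleton bound of
any irreducible constacyclic code whose generator polynomial has order `n` is `ω + 1`). -/
theorem stabilizer_card_of_primitive_coset (q n : ℕ) (hq : IsPrimePow q) (hn : 0 < n)
    (hco : Nat.Coprime n q) (γ : ZMod n) (hγ : IsUnit γ)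
    (τ : ℕ) (hτ : τ = orderOf (q : ZMod n))
    (r : ℕ) (hr : r = ∏ p ∈ n.primeFactors, p)
    (ω : ℕ) (hω : ω = if q ^ orderOf (q : ZMod r) % 4 = 3 ∧ 8 ∣ n
      then 2 * orderOf (q : ZMod r) else orderOf (q : ZMod r)) :
    ω ∣ τ ∧
    Nat.card {a : ZMod n |
        (a + ·) '' {x : ZMod n | ∃ i : ℕ, x = γ * (q : ZMod n) ^ i} =
          {x : ZMod n | ∃ i : ℕ, x = γ * (q : ZMod n) ^ i}} = τ / ω := by
  haveI : NeZero n := ⟨hn.ne'⟩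
  have hq2 : 2 ≤ q := hq.two_le
  have hrdvd : r ∣ n := hr ▸ Nat.prod_primeFactors_dvd n
  have hrpos : 0 < r := Nat.pos_of_dvd_of_pos hrdvd hn
  have hcoq : ∀ k, k ∣ n → Nat.Coprime q k := fun k hk => (Nat.Coprime.coprime_dvd_left hk hco).symm
  set e := orderOf (q : ZMod r) with he
  have hepos : 0 < e := orderOf_cast_pos q r hrpos (hcoq r hrdvd)
  have hτpos : 0 < τ := hτ ▸ orderOf_cast_pos q n hn (hcoq n dvd_rfl)
  have hωpos : 0 < ω := by rw [hω]; split <;> omega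
  have heω : e ∣ ω := by
    rw [hω]; split
    · exact ⟨2, by ring⟩
    · exact dvd_rfl
  have hord_dvd_iff : ∀ (k s : ℕ), (orderOf ((q:ℕ) : ZMod k) ∣ s ↔ k ∣ q^s - 1) := by
    intro k s
    rw [orderOf_dvd_iff_pow_eq_one, cast_pow_eq_one_iff s (by omega)]
  -- ω divides the order of q mod any M with r ∣ M and (8 ∣ n → 4 ∣ M)
  have hωdvd_ord : ∀ M : ℕ, r ∣ M → (8 ∣ n → 4 ∣ M) → ω ∣ orderOf ((q:ℕ) : ZMod M) := by
    intro M hrM h4M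
    have heM : e ∣ orderOf ((q:ℕ) : ZMod M) := he ▸ orderOf_cast_dvd hrM q
    rw [hω]; split
    case isTrue hcon =>
      obtain ⟨h3, h8⟩ := hcon
      apply two_dvd_of_mod4 h3 heM
      have h4 : 4 ∣ q ^ orderOf ((q:ℕ):ZMod M) - 1 := (h4M h8).trans ((hord_dvd_iff M _).mp dvd_rfl)
      have h1 : 1 ≤ q ^ orderOf ((q:ℕ):ZMod M) := Nat.one_le_pow _ _ (by omega)
      omega
    case isFalse h => exact heM
  have hωτ : ω ∣ τ := hτ ▸ hωdvd_ord n hrdvd (fun h8 => dvd_trans (by norm_num) h8)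
  refine ⟨hωτ, ?_⟩
  -- X = q^ω, D = X - 1, t = τ/ω
  set X := q^ω with hX
  have hX2 : 2 ≤ X := by
    have := Nat.one_lt_pow hωpos.ne' (show 1 < q by omega)
    omega
  set D := X - 1 with hD
  have hDpos : 0 < D := by omega
  set t := τ / ω with ht
  have hτωt : τ = ω * t := (Nat.mul_div_cancel' hωτ).symm
  have htpos : 0 < t := by
    rcases Nat.eq_zero_or_pos t with h0 | h0
    · rw [h0, mul_zero] at hτωt; omega
    · exact h0
  have hordX : orderOf ((X:ℕ) : ZMod n) = t := by
    have hcast : ((X:ℕ) : ZMod n) = ((q:ℕ) : ZMod n)^ω := Nat.cast_pow q ω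
    rw [hcast, orderOf_pow' _ hωpos.ne', ← hτ, Nat.gcd_comm, Nat.gcd_eq_left hωτ, ht]
  -- basic divisibility of D
  have hrX : r ∣ D := by
    have h1 : r ∣ q^e - 1 := (hord_dvd_iff r e).mp dvd_rfl
    have h2 : q^e - 1 ∣ D := by
      obtain ⟨c, hc⟩ := heω
      rw [hD, hX, hc, pow_mul]
      simpa using Nat.sub_dvd_pow_sub_pow (q^e) 1 c
    exact h1.trans h2
  have hpD : ∀ p ∈ n.primeFactors, p ∣ D := by
    intro p hp
    exact dvd_trans (hr ▸ Finset.dvd_prod_of_mem _ hp) hrX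
  have h4X : 8 ∣ n → 4 ∣ D := by
    intro h8
    have hq_odd : q % 2 = 1 := by
      have h2n : (2:ℕ) ∣ n := dvd_trans (by norm_num) h8
      rcases Nat.even_or_odd q with ⟨c, hc⟩ | ⟨c, hc⟩
      · exfalso
        have h2q : (2:ℕ) ∣ q := ⟨c, by omega⟩
        have := ((hcoq 2 h2n).symm).eq_one_of_dvd h2q
        omega
      · omega
    by_cases h3 : q ^ e % 4 = 3
    · have hω2e : ω = 2*e := by rw [hω, if_pos ⟨h3, h8⟩]
      have hXe : X = (q^e)^2 := by rw [hX, hω2e, ← pow_mul]; ring_nf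
      have hsq : (q^e)^2 % 4 = 1 := by rw [Nat.pow_mod, h3]
      have h1 : 1 ≤ (q^e)^2 := Nat.one_le_pow _ _ (by omega)
      omega
    · have hωe : ω = e := by rw [hω, if_neg (by tauto)]
      have hodd : q ^ e % 2 = 1 := by norm_num [Nat.pow_mod, hq_odd]
      have h1 : 1 ≤ q^e := Nat.one_le_pow _ _ (by omega)
      have hqe1 : q ^ e % 4 = 1 := by omega
      have h4e : (4:ℕ) ∣ q^e - 1 := by omega
      rw [hD, hX, hωe]
      exact h4e
  -- per-prime: p^(a_p - E_p) ∣ t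
  have hF1 : ∀ p ∈ n.primeFactors, p ^ (n.factorization p - D.factorization p) ∣ t := by
    intro p hp
    have hpp : p.Prime := Nat.prime_of_mem_primeFactors hp
    have hpa_n : p ^ (n.factorization p) ∣ n := Nat.ordProj_dvd n p
    have hE1 : 1 ≤ D.factorization p := hpp.factorization_pos_of_dvd hDpos.ne' (hpD p hp)
    by_cases hEa : n.factorization p ≤ D.factorization p
    · rw [Nat.sub_eq_zero_of_le hEa, pow_zero]; exact one_dvd t
    · push_neg at hEa
      by_cases hsp : p = 2 ∧ ¬ (2 ≤ D.factorization p)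
      · obtain ⟨hp2, hE2⟩ := hsp
        subst hp2
        have hE1' : D.factorization 2 = 1 := by omega
        have h8 : ¬ (8:ℕ) ∣ n := by
          intro h8
          refine hE2 ((Nat.Prime.pow_dvd_iff_le_factorization Nat.prime_two hDpos.ne').mp ?_)
          have := h4X h8
          norm_num
          omega
        have ha2 : n.factorization 2 = 2 := by
          have hle : n.factorization 2 ≤ 2 := by
            by_contra hgt
            push_neg at hgt
            refine h8 (dvd_trans ?_ hpa_n)
            calc (8:ℕ) = 2^3 := by norm_num
            _ ∣ 2^(n.factorization 2) := pow_dvd_pow 2 (by omega)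
          omega
        have h4n : (4:ℕ) ∣ n := by
          have h22 : (2:ℕ)^2 ∣ n := by
            calc (2:ℕ)^2 = 2^(n.factorization 2) := by rw [ha2]
            _ ∣ n := hpa_n
          norm_num at h22
          exact h22
        have hX4 : X % 4 = 3 := by
          have h2D : (2:ℕ) ∣ D := hpD 2 hp
          have h4D : ¬ (4:ℕ) ∣ D := by
            intro hc4
            have h22 : (2:ℕ)^2 ∣ D := by norm_num; exact hc4
            have := (Nat.Prime.pow_dvd_iff_le_factorization Nat.prime_two hDpos.ne').mp h22
            omega
          omega
        have hnXt : n ∣ X^t - 1 := by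
          rw [← cast_pow_eq_one_iff t (by omega)]
          have := pow_orderOf_eq_one ((X:ℕ) : ZMod n)
          rwa [hordX] at this
        have hXt4 : X^t % 4 = 1 := by
          have h4Xt : (4:ℕ) ∣ X^t - 1 := h4n.trans hnXt
          have h1 : 1 ≤ X^t := Nat.one_le_pow _ _ (by omega)
          omega
        have h2t := two_dvd_of_mod4 (q := X) (e := 1) (F := t) (by simpa using hX4)
          (one_dvd t) hXt4
        rw [ha2, hE1']
        simpa using h2t
      · have h2E : p = 2 → 2 ≤ D.factorization p := by
          intro hp2; by_contra hc; exact hsp ⟨hp2, hc⟩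
        have hEdvd : p^(D.factorization p) ∣ D := Nat.ordProj_dvd D p
        have hEnd : ¬ p^(D.factorization p + 1) ∣ D :=
          Nat.pow_succ_factorization_not_dvd hDpos.ne' hpp
        have hord := orderOf_cast_exact hpp hX2 hE1 h2E hEdvd hEnd hEa
        rw [← hord, ← hordX]
        exact orderOf_cast_dvd hpa_n X
  -- t ∣ t' ∣ n
  set t' := ∏ p ∈ n.primeFactors, p ^ (n.factorization p - D.factorization p) with ht'
  have ht'pos : 0 < t' := Finset.prod_pos (fun p hp => pow_pos (Nat.prime_of_mem_primeFactors hp).pos _)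
  have ht'n : t' ∣ n := by
    have h1 : t' ∣ ∏ p ∈ n.primeFactors, p ^ (n.factorization p) := by
      apply Finset.prod_dvd_prod_of_dvd
      intro p hp
      exact pow_dvd_pow p (Nat.sub_le _ _)
    have h2 : ∏ p ∈ n.primeFactors, p ^ (n.factorization p) = n := by
      conv_rhs => rw [← Nat.factorization_prod_pow_eq_self hn.ne']
      rfl
    rwa [h2] at h1
  have hXt'ne : X ^ t' - 1 ≠ 0 := by
    have := Nat.one_lt_pow ht'pos.ne' (show 1 < X by omega)
    omega
  have htt' : t ∣ t' := by
    rw [← hordX]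
    apply orderOf_dvd_of_pow_eq_one
    apply (cast_pow_eq_one_iff t' (by omega)).mpr
    rw [← Nat.factorization_le_iff_dvd hn.ne' hXt'ne, Finsupp.le_def]
    intro p
    by_cases hp : p ∈ n.primeFactors
    · have hpp := Nat.prime_of_mem_primeFactors hp
      have hE1 : 1 ≤ D.factorization p := hpp.factorization_pos_of_dvd hDpos.ne' (hpD p hp)
      have ha1 : 1 ≤ n.factorization p :=
        hpp.factorization_pos_of_dvd hn.ne' (Nat.dvd_of_mem_primeFactors hp)
      have hEdvd : p^(min (D.factorization p) (n.factorization p)) ∣ D :=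
        dvd_trans (pow_dvd_pow p (min_le_left _ _)) (Nat.ordProj_dvd D p)
      have hmin1 : 1 ≤ min (D.factorization p) (n.factorization p) := le_min hE1 ha1
      have hchain := soft_pow_dvd (show 1 ≤ X by omega) hmin1 hEdvd
        (n.factorization p - D.factorization p)
      have hpow : p^(n.factorization p) ∣ X^(p^(n.factorization p - D.factorization p)) - 1 :=
        dvd_trans (pow_dvd_pow p (by omega)) hchain
      have hdvd2 : X^(p^(n.factorization p - D.factorization p)) - 1 ∣ X^t' - 1 :=
        pow_sub_one_dvd_pow_sub_one X _ t' (Finset.dvd_prod_of_mem _ hp)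
      exact (Nat.Prime.pow_dvd_iff_le_factorization hpp hXt'ne).mp (hpow.trans hdvd2)
    · have h0 : n.factorization p = 0 := by
        rwa [← Finsupp.notMem_support_iff, Nat.support_factorization]
      simp [h0]
  have htn : t ∣ n := htt'.trans ht'n
  set m'' := n / t with hm''
  have hm''dvd : m'' ∣ n := Nat.div_dvd_of_dvd htn
  have hm''pos : 0 < m'' := Nat.pos_of_dvd_of_pos hm''dvd hn
  have hnm'' : n / m'' = t := Nat.div_div_self htn hn.ne'
  have hm''D : m'' ∣ D := by
    rw [← Nat.factorization_le_iff_dvd hm''pos.ne' hDpos.ne', Finsupp.le_def]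
    intro p
    rw [Nat.factorization_div htn]
    simp only [Finsupp.tsub_apply]
    by_cases hp : p ∈ n.primeFactors
    · have hpp := Nat.prime_of_mem_primeFactors hp
      have hvt : n.factorization p - D.factorization p ≤ t.factorization p :=
        (Nat.Prime.pow_dvd_iff_le_factorization hpp htpos.ne').mp (hF1 p hp)
      omega
    · have h0 : n.factorization p = 0 := by
        rwa [← Finsupp.notMem_support_iff, Nat.support_factorization]
      simp [h0]
  have hvt_le : ∀ p ∈ n.primeFactors,
      t.factorization p ≤ n.factorization p - D.factorization p := by
    intro p hp
    have h1 : t.factorization ≤ t'.factorization :=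
      (Nat.factorization_le_iff_dvd htpos.ne' ht'pos.ne').mpr htt'
    have h2 := Finsupp.le_def.mp h1 p
    rwa [factorization_prod_pow_apply _ (fun p hp => Nat.prime_of_mem_primeFactors hp) _ hp] at h2
  have hrm'' : r ∣ m'' := by
    rw [hr]
    apply Finset.prod_primes_dvd
    · exact fun p hp => (Nat.prime_of_mem_primeFactors hp).prime
    · intro p hp
      have hpp := Nat.prime_of_mem_primeFactors hp
      have hE1 : 1 ≤ D.factorization p := hpp.factorization_pos_of_dvd hDpos.ne' (hpD p hp)
      have ha1 : 1 ≤ n.factorization p :=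
        hpp.factorization_pos_of_dvd hn.ne' (Nat.dvd_of_mem_primeFactors hp)
      have hle : 1 ≤ m''.factorization p := by
        rw [Nat.factorization_div htn]
        simp only [Finsupp.tsub_apply]
        have := hvt_le p hp
        omega
      have := (Nat.Prime.pow_dvd_iff_le_factorization hpp hm''pos.ne').mpr hle
      simpa using this
  have h4m'' : 8 ∣ n → 4 ∣ m'' := by
    intro h8
    have h2mem : 2 ∈ n.primeFactors :=
      Nat.mem_primeFactors.mpr ⟨Nat.prime_two, dvd_trans (by norm_num) h8, hn.ne'⟩
    have ha3 : 3 ≤ n.factorization 2 := by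
      apply (Nat.Prime.pow_dvd_iff_le_factorization Nat.prime_two hn.ne').mp
      norm_num
      exact h8
    have hE2 : 2 ≤ D.factorization 2 := by
      apply (Nat.Prime.pow_dvd_iff_le_factorization Nat.prime_two hDpos.ne').mp
      norm_num
      exact h4X h8
    have hle : 2 ≤ m''.factorization 2 := by
      rw [Nat.factorization_div htn]
      simp only [Finsupp.tsub_apply]
      have := hvt_le 2 h2mem
      omega
    have := (Nat.Prime.pow_dvd_iff_le_factorization Nat.prime_two hm''pos.ne').mpr hle
    norm_num at this
    exact this
  -- the coset C and stabilizer S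
  set C : Set (ZMod n) := {x : ZMod n | ∃ i : ℕ, x = γ * (q : ZMod n) ^ i} with hC
  set S : Set (ZMod n) := {a : ZMod n | (a + ·) '' C = C} with hS
  have hqu : IsUnit ((q:ℕ) : ZMod n) := (ZMod.isUnit_iff_coprime q n).mpr (hcoq n dvd_rfl)
  have hSzero : (0:ZMod n) ∈ S := by
    show ((0:ZMod n) + ·) '' C = C
    simp
  -- S as a subgroup
  have hSadd : ∀ a b : ZMod n, a ∈ S → b ∈ S → a + b ∈ S := by
    intro a b ha hb
    show ((a + b) + ·) '' C = C
    have hcomp : (fun x => (a + b) + x) = (fun x => a + x) ∘ (fun x => b + x) := by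
      funext x; simp [add_assoc]
    rw [hcomp, Set.image_comp, hb, ha]
  have hSneg : ∀ a : ZMod n, a ∈ S → -a ∈ S := by
    intro a ha
    show ((-a) + ·) '' C = C
    conv_lhs => rw [← ha, ← Set.image_comp]
    have hcomp : ((fun x => (-a) + x) ∘ (fun x => a + x)) = id := by
      funext x; simp
    rw [hcomp, Set.image_id]
  set Sg : AddSubgroup (ZMod n) :=
    { carrier := S
      zero_mem' := hSzero
      add_mem' := fun {a} {b} ha hb => hSadd a b ha hb
      neg_mem' := fun {a} ha => hSneg a ha } with hSg
  set s := Nat.card S with hs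
  have hsdvd : s ∣ n := by
    have h1 := AddSubgroup.card_addSubgroup_dvd_card Sg
    rwa [Nat.card_zmod] at h1
  have hspos : 0 < s := by
    have : Nonempty S := ⟨⟨0, hSzero⟩⟩
    exact Nat.card_pos
  set m := n / s with hm
  have hmdvd : m ∣ n := Nat.div_dvd_of_dvd hsdvd
  have hmpos : 0 < m := Nat.pos_of_dvd_of_pos hmdvd hn
  have hsm : m * s = n := Nat.div_mul_cancel hsdvd
  have hnm : n / m = s := Nat.div_div_self hsdvd hn.ne'
  -- S is the set of multiples of m
  have hSmul : S = (AddSubgroup.zmultiples (((m:ℕ)) : ZMod n) : Set (ZMod n)) := by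
    have h1 : S ⊆ (AddSubgroup.zmultiples (((m:ℕ)) : ZMod n) : Set (ZMod n)) := by
      intro x hx
      have hox : addOrderOf (⟨x, hx⟩ : Sg) ∣ s := addOrderOf_dvd_natCard (⟨x, hx⟩ : Sg)
      have hsx : s • x = 0 := by
        have h3 : s • (⟨x, hx⟩ : Sg) = 0 := addOrderOf_dvd_iff_nsmul_eq_zero.mp hox
        have h4 := congrArg (Subtype.val) h3
        simpa using h4
      have hdvd : n ∣ s * x.val := by
        have h5 : ((s * x.val : ℕ) : ZMod n) = 0 := by
          push_cast
          rw [ZMod.natCast_zmod_val, ← nsmul_eq_mul]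
          exact hsx
        rwa [ZMod.natCast_eq_zero_iff] at h5
      have hmx : m ∣ x.val := by
        obtain ⟨c, hc⟩ := hdvd
        refine ⟨c, Nat.eq_of_mul_eq_mul_left hspos ?_⟩
        rw [hc, ← hsm]
        ring
      obtain ⟨k, hk⟩ := hmx
      apply AddSubgroup.mem_zmultiples_iff.mpr
      refine ⟨(k : ℤ), ?_⟩
      rw [zsmul_eq_mul]
      push_cast
      rw [show ((k:ZMod n) * (m:ZMod n)) = ((m * k : ℕ) : ZMod n) by push_cast; ring, ← hk,
        ZMod.natCast_zmod_val]
    have hcard : Nat.card (AddSubgroup.zmultiples (((m:ℕ)) : ZMod n)) = s := by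
      rw [Nat.card_zmultiples, ZMod.addOrderOf_coe m hn.ne', Nat.gcd_comm,
        Nat.gcd_eq_left hmdvd]
      exact hnm
    have e1 : (AddSubgroup.zmultiples (((m:ℕ)) : ZMod n) : Set (ZMod n)).ncard = s := by
      rw [← Nat.card_coe_set_eq]
      exact hcard
    have e2 : S.ncard = s := by rw [← Nat.card_coe_set_eq]
    exact Set.eq_of_subset_of_ncard_le h1 (by omega) (Set.toFinite _)
  -- KEY: 1 + m*z is a power of q
  have hKEY : ∀ z : ZMod n, ∃ i : ℕ, 1 + ((m:ℕ) : ZMod n) * z = ((q:ℕ):ZMod n)^i := by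
    intro z
    have hmem : ((m:ℕ):ZMod n) * (γ * z) ∈ S := by
      rw [hSmul]
      apply AddSubgroup.mem_zmultiples_iff.mpr
      refine ⟨((γ*z).val : ℤ), ?_⟩
      rw [zsmul_eq_mul]
      push_cast
      rw [ZMod.natCast_zmod_val]
      ring
    have hγC : γ ∈ C := ⟨0, by simp⟩
    have himg : ((((m:ℕ):ZMod n) * (γ * z)) + ·) '' C = C := hmem
    have hmemC : ((m:ℕ):ZMod n) * (γ * z) + γ ∈ C := by
      rw [← himg]
      exact ⟨γ, hγC, rfl⟩
    obtain ⟨i, hi⟩ := hmemC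
    refine ⟨i, hγ.mul_left_cancel ?_⟩
    calc γ * (1 + ((m:ℕ):ZMod n) * z) = ((m:ℕ):ZMod n) * (γ * z) + γ := by ring
    _ = γ * ((q:ℕ):ZMod n)^i := hi
  -- every prime of n divides m
  have hpm : ∀ p ∈ n.primeFactors, p ∣ m := by
    intro p hp
    have hpp := Nat.prime_of_mem_primeFactors hp
    haveI : Fact p.Prime := ⟨hpp⟩
    haveI : NeZero p := ⟨hpp.pos.ne'⟩
    have hpn : p ∣ n := Nat.dvd_of_mem_primeFactors hp
    by_contra hpm'
    have hmne : ((m:ℕ) : ZMod p) ≠ 0 := by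
      rw [Ne, ZMod.natCast_eq_zero_iff]
      exact hpm'
    set z0 : ZMod p := - (((m:ℕ):ZMod p))⁻¹ with hz0
    obtain ⟨i, hi⟩ := hKEY (((z0.val : ℕ) : ZMod n))
    have hcast := congrArg (ZMod.castHom hpn (ZMod p)) hi
    simp only [map_add, map_one, map_mul, map_pow, map_natCast] at hcast
    rw [ZMod.natCast_zmod_val] at hcast
    have hzero : (1 : ZMod p) + ((m:ℕ):ZMod p) * z0 = 0 := by
      rw [hz0, mul_neg, mul_inv_cancel₀ hmne]
      ring
    rw [hzero] at hcast
    have hup : IsUnit ((q:ℕ) : ZMod p) := (ZMod.isUnit_iff_coprime q p).mpr (hcoq p hpn)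
    exact absurd hcast.symm (hup.pow i).ne_zero
  have hrm : r ∣ m := hr ▸ Finset.prod_primes_dvd _
    (fun p hp => (Nat.prime_of_mem_primeFactors hp).prime) hpm
  have h4m : 8 ∣ n → 4 ∣ m := by
    intro h8
    by_contra h4m'
    -- square roots of 1 among powers of q
    have hsq : ∀ w : ZMod n, (∃ i : ℕ, w = ((q:ℕ):ZMod n)^i) → w^2 = 1 → w ≠ 1 →
        (τ % 2 = 0 ∧ w = ((q:ℕ):ZMod n)^(τ/2)) := by
      rintro w ⟨i, rfl⟩ hw2 hw1
      have hdvd : τ ∣ 2*i := by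
        rw [hτ]
        apply orderOf_dvd_of_pow_eq_one
        rw [mul_comm, pow_mul]
        exact hw2
      have h1 : ((q:ℕ):ZMod n)^i = ((q:ℕ):ZMod n)^(i % τ) := by
        conv_lhs => rw [← Nat.div_add_mod i τ]
        rw [pow_add, pow_mul]
        have hqτ : ((q:ℕ):ZMod n)^τ = 1 := by rw [hτ]; exact pow_orderOf_eq_one _
        rw [hqτ, one_pow, one_mul]
      have hmod : τ ∣ 2 * (i % τ) := by
        have hmm := (Nat.mod_modEq i τ).mul_left 2
        have h2 : (2*i) ≡ 0 [MOD τ] := (Nat.modEq_zero_iff_dvd).mpr hdvd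
        exact (Nat.modEq_zero_iff_dvd).mp (hmm.trans h2)
      have hlt : i % τ < τ := Nat.mod_lt _ hτpos
      obtain ⟨c, hc⟩ := hmod
      have hi0 : i % τ ≠ 0 := by
        intro h0
        apply hw1
        rw [h1, h0, pow_zero]
      have hc2 : c < 2 := by
        have hlt2 : τ * c < τ * 2 := by omega
        exact Nat.lt_of_mul_lt_mul_left hlt2
      have hc1 : c = 1 := by
        rcases c with _ | c
        · rw [Nat.mul_zero] at hc; omega
        · omega
      subst hc1
      constructor
      · omega
      · rw [h1]
        congr 1
        omega
    -- setup 2-adic data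
    have h2mem : 2 ∈ n.primeFactors :=
      Nat.mem_primeFactors.mpr ⟨Nat.prime_two, dvd_trans (by norm_num) h8, hn.ne'⟩
    have h2m : 2 ∣ m := hpm 2 h2mem
    obtain ⟨m0, hm0⟩ := h2m
    have hm0odd : ¬ 2 ∣ m0 := by
      rintro ⟨c, hc⟩
      exact h4m' ⟨c, by omega⟩
    set a2 := n.factorization 2 with ha2
    have ha3 : 3 ≤ a2 := by
      apply (Nat.Prime.pow_dvd_iff_le_factorization Nat.prime_two hn.ne').mp
      norm_num
      exact h8
    set P := 2^a2 with hP
    have hPdvd : P ∣ n := Nat.ordProj_dvd n 2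
    set u0 := n / P with hu0
    have hPu : P * u0 = n := Nat.ordProj_mul_ordCompl_eq_self n 2
    have hu0odd : ¬ 2 ∣ u0 := Nat.not_dvd_ordCompl Nat.prime_two hn.ne'
    have hu0pos : 0 < u0 := Nat.ordCompl_pos 2 hn.ne'
    have hP8 : 8 ≤ P := by
      calc (8:ℕ) = 2^3 := by norm_num
      _ ≤ 2^a2 := Nat.pow_le_pow_right (by norm_num) ha3
    have hco2 : Nat.Coprime P u0 := (Nat.coprime_ordCompl Nat.prime_two hn.ne').pow_left _
    have hm0u0 : m0 ∣ u0 := by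
      have hm0m : m0 ∣ m := ⟨2, by omega⟩
      have hm0n : m0 ∣ P * u0 := by rw [hPu]; exact hm0m.trans hmdvd
      have hcm0P : Nat.Coprime m0 P :=
        (((Nat.Prime.coprime_iff_not_dvd Nat.prime_two).mpr hm0odd).symm).pow_right _
      exact (Nat.Coprime.dvd_of_dvd_mul_left hcm0P hm0n)
    have hn2 : n / 2 = 2^(a2-1) * u0 := by
      rw [← hPu, hP, show (2:ℕ)^a2 = 2 * 2^(a2-1) by
        rw [← pow_succ']; congr 1; omega, Nat.mul_assoc, Nat.mul_div_cancel_left _ two_pos]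
    have hmn2 : m ∣ n / 2 := by
      rw [hn2, hm0]
      exact Nat.mul_dvd_mul (dvd_pow_self 2 (by omega)) hm0u0
    -- first involution w1 = 1 + n/2
    set w1 : ZMod n := ((1 + n/2 : ℕ) : ZMod n) with hw1def
    have hw1mem : ∃ i : ℕ, w1 = ((q:ℕ):ZMod n)^i := by
      obtain ⟨c2, hc2⟩ := hmn2
      obtain ⟨i, hi⟩ := hKEY ((c2 : ℕ) : ZMod n)
      refine ⟨i, ?_⟩
      rw [← hi, hw1def, hc2]
      push_cast
      ring
    have hw1sq : w1^2 = 1 := by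
      obtain ⟨v, hv⟩ := h8
      have hnat : (1 + n/2)^2 = 1 + n * (1 + 2*v) := by
        rw [hv, show 8*v/2 = 4*v by omega]
        ring
      rw [hw1def, ← Nat.cast_pow, hnat]
      push_cast [ZMod.natCast_self]
      ring
    have hw1ne : w1 ≠ 1 := by
      intro h
      have h1 : ((1 + n/2 : ℕ) : ZMod n) = ((1:ℕ) : ZMod n) := by
        rw [← hw1def, h]; norm_num
      have h2 := (ZMod.natCast_eq_natCast_iff _ _ _).mp h1
      have h3 : n ∣ (1 + n/2) - 1 := (Nat.modEq_iff_dvd' (by omega)).mp h2.symm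
      have h4 : n ∣ n/2 := by simpa using h3
      have := Nat.le_of_dvd (by omega) h4
      omega
    -- second involution w2 from CRT
    obtain ⟨k2, hk2a, hk2u⟩ := Nat.chineseRemainder hco2 (P - 1) 1
    have hk2odd : k2 % 2 = 1 := by
      have h2P : (2:ℕ) ∣ P := dvd_pow_self 2 (by omega)
      have := Nat.ModEq.of_dvd h2P hk2a
      have h5 : k2 % 2 = (P-1) % 2 := this
      omega
    have hk2pos : 1 ≤ k2 := by omega
    have hk2m : k2 ≡ 1 [MOD m] := by
      have h2' : k2 ≡ 1 [MOD 2] := by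
        show k2 % 2 = 1 % 2
        omega
      have hm0' : k2 ≡ 1 [MOD m0] := Nat.ModEq.of_dvd hm0u0 hk2u
      rw [hm0]
      exact (Nat.modEq_and_modEq_iff_modEq_mul
        (((Nat.Prime.coprime_iff_not_dvd Nat.prime_two).mpr hm0odd))).mp ⟨h2', hm0'⟩
    set w2 : ZMod n := ((k2 : ℕ) : ZMod n) with hw2def
    have hw2mem : ∃ i : ℕ, w2 = ((q:ℕ):ZMod n)^i := by
      obtain ⟨c3, hc3⟩ := (Nat.modEq_iff_dvd' hk2pos).mp hk2m.symm
      obtain ⟨i, hi⟩ := hKEY ((c3 : ℕ) : ZMod n)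
      refine ⟨i, ?_⟩
      rw [← hi, hw2def, show k2 = 1 + m * c3 by omega]
      push_cast
      ring
    have hw2sq : w2^2 = 1 := by
      rw [hw2def, cast_pow_eq_one_iff 2 hk2pos]
      have hPk : P ∣ k2^2 - 1 := by
        have h1 : k2^2 ≡ (P-1)^2 [MOD P] := hk2a.pow 2
        have hsq' : (P-1)^2 = P*(P-2) + 1 := by
          obtain ⟨Pm, hPm⟩ : ∃ Pm, P = Pm + 2 := ⟨P - 2, by omega⟩
          rw [hPm]
          simp [Nat.add_sub_cancel]
          ring
        have h2' : (P-1)^2 ≡ 1 [MOD P] := by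
          show (P-1)^2 % P = 1 % P
          rw [hsq', Nat.mul_add_mod]
        exact (Nat.modEq_iff_dvd' (Nat.one_le_pow _ _ (by omega))).mp (h1.trans h2').symm
      have hu0k : u0 ∣ k2^2 - 1 := by
        have h1 : k2^2 ≡ 1 [MOD u0] := by
          have := hk2u.pow 2
          simpa using this
        exact (Nat.modEq_iff_dvd' (Nat.one_le_pow _ _ (by omega))).mp h1.symm
      rw [← hPu]
      exact hco2.mul_dvd_of_dvd_of_dvd hPk hu0k
    have hw2ne1 : w2 ≠ 1 := by
      intro h
      have h1 : ((k2:ℕ) : ZMod n) = ((1:ℕ) : ZMod n) := by rw [← hw2def, h]; norm_num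
      have h2 := (ZMod.natCast_eq_natCast_iff _ _ _).mp h1
      have h3 : k2 ≡ 1 [MOD P] := Nat.ModEq.of_dvd hPdvd h2
      have h4 : (P-1) % P = 1 % P := (hk2a.symm.trans h3)
      have h5 : (P-1) % P = P-1 := Nat.mod_eq_of_lt (by omega)
      have h6 : 1 % P = 1 := Nat.mod_eq_of_lt (by omega)
      omega
    have hw1w2 : w1 ≠ w2 := by
      intro h
      have h1 : ((1 + n/2 : ℕ) : ZMod n) = ((k2:ℕ) : ZMod n) := by
        rw [← hw1def, ← hw2def, h]
      have h2 := (ZMod.natCast_eq_natCast_iff _ _ _).mp h1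
      have h3 : (1 + n/2) ≡ k2 [MOD P] := Nat.ModEq.of_dvd hPdvd h2
      have h4 : (1 + n/2) ≡ P - 1 [MOD P] := h3.trans hk2a
      have h5 : (1 + n/2) ≡ 1 + 2^(a2-1) [MOD P] := by
        rw [hn2]
        obtain ⟨u, hu⟩ : ∃ u, u0 = 2*u+1 := ⟨u0/2, by omega⟩
        have hsplit : 1 + 2^(a2-1) * u0 = (1 + 2^(a2-1)) + P * u := by
          rw [hu, hP, show (2:ℕ)^a2 = 2^(a2-1) * 2 by rw [← pow_succ]; congr 1; omega]
          ring
        rw [hsplit]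
        show ((1 + 2^(a2-1)) + P * u) % P = (1 + 2^(a2-1)) % P
        exact Nat.add_mul_mod_self_left _ _ _
      have h6 : (1 + 2^(a2-1)) ≡ P - 1 [MOD P] := (h5.symm.trans h4)
      have hge : 4 ≤ 2^(a2-1) := by
        calc (4:ℕ) = 2^2 := by norm_num
        _ ≤ 2^(a2-1) := Nat.pow_le_pow_right (by norm_num) (by omega)
      have hPe : P = 2^(a2-1)*2 := by rw [hP, ← pow_succ]; congr 1; omega
      have hlt1 : 1 + 2^(a2-1) < P := by omega
      have := h6.eq_of_lt_of_lt hlt1 (by omega)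
      omega
    obtain ⟨hτe, hw1eq⟩ := hsq w1 hw1mem hw1sq hw1ne
    obtain ⟨-, hw2eq⟩ := hsq w2 hw2mem hw2sq hw2ne1
    exact hw1w2 (hw1eq.trans hw2eq.symm)
  -- counting: τ = s * orderOf (q mod m)
  haveI : NeZero m := ⟨hmpos.ne'⟩
  have hτsF : τ = s * orderOf ((q:ℕ) : ZMod m) := by
    set π := ZMod.castHom hmdvd (ZMod m) with hπ
    have hker : ∀ y : ZMod n, π y = 0 → y ∈ S := by
      intro y h0
      rw [hSmul]
      rw [hπ, castHom_val' hmdvd y, ZMod.natCast_eq_zero_iff] at h0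
      obtain ⟨k, hk⟩ := h0
      apply AddSubgroup.mem_zmultiples_iff.mpr
      refine ⟨(k:ℤ), ?_⟩
      rw [zsmul_eq_mul]
      push_cast
      rw [show ((k:ZMod n) * (m:ZMod n)) = ((m * k : ℕ) : ZMod n) by push_cast; ring, ← hk,
        ZMod.natCast_zmod_val]
    have hCpre : (π ⁻¹' (π '' C)) = C := by
      apply Set.Subset.antisymm ?_ (Set.subset_preimage_image π C)
      rintro x hx
      obtain ⟨c, hcC, hcx⟩ := hx
      have hker' : x - c ∈ S := hker _ (by rw [map_sub, hcx, sub_self])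
      have himg : ((x - c) + ·) '' C = C := hker'
      rw [← himg]
      exact ⟨c, hcC, by ring⟩
    have hCeq : C = {y : ZMod n |
        ∃ i : ℕ, y = ↑(hγ.unit) * ((hqu.unit : (ZMod n)ˣ) : ZMod n)^i} := by
      rw [hC]; simp only [hγ.unit_spec, IsUnit.unit_spec]
    have hτcard : Nat.card C = τ := by
      rw [hCeq, card_coset_powers hγ.unit hqu.unit, hqu.unit_spec, hτ]
    have hγm : IsUnit (π γ) := hγ.map π
    have hqm : IsUnit ((q:ℕ) : ZMod m) := (ZMod.isUnit_iff_coprime q m).mpr (hcoq m hmdvd)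
    have hDimg : π '' C = {y : ZMod m |
        ∃ i : ℕ, y = ↑(hγm.unit) * ((hqm.unit : (ZMod m)ˣ) : ZMod m)^i} := by
      ext y
      simp only [Set.mem_image, Set.mem_setOf_eq, hγm.unit_spec, hqm.unit_spec, hC]
      constructor
      · rintro ⟨x, ⟨i, rfl⟩, rfl⟩
        exact ⟨i, by rw [map_mul, map_pow, map_natCast]⟩
      · rintro ⟨i, rfl⟩
        exact ⟨γ * ((q:ℕ):ZMod n)^i, ⟨i, rfl⟩, by rw [map_mul, map_pow, map_natCast]⟩
    have hDcard : Nat.card ↥(π '' C) = orderOf ((q:ℕ) : ZMod m) := by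
      rw [hDimg, card_coset_powers hγm.unit hqm.unit, hqm.unit_spec]
    rw [← hτcard, ← hCpre, card_preimage_castHom hn hmdvd, hDcard, hnm]
  -- lower bound: t ≤ s
  haveI : NeZero m'' := ⟨hm''pos.ne'⟩
  have hts : t ≤ s := by
    set π'' := ZMod.castHom hm''dvd (ZMod m'') with hπ''
    have hqω1 : ((q:ℕ) : ZMod m'')^ω = 1 := by
      rw [cast_pow_eq_one_iff ω (by omega)]
      exact hm''D
    set G2 : Set (ZMod n) := {y : ZMod n | ∃ k : ℕ, y = (((q:ℕ):ZMod n)^ω)^k} with hG2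
    have hqωu : IsUnit (((q:ℕ):ZMod n)^ω) := hqu.pow ω
    have hG2card : Nat.card G2 = t := by
      have hset : G2 = {y : ZMod n |
          ∃ k : ℕ, y = ↑(1:(ZMod n)ˣ) * ((hqωu.unit : (ZMod n)ˣ) : ZMod n)^k} := by
        rw [hG2]; simp only [hqωu.unit_spec, Units.val_one, one_mul]
      rw [hset, card_coset_powers 1 hqωu.unit, hqωu.unit_spec,
        orderOf_pow' _ hωpos.ne', ← hτ, Nat.gcd_comm, Nat.gcd_eq_left hωτ]
    set W : Set (ZMod n) := π'' ⁻¹' {1} with hW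
    have hWcard : Nat.card W = t := by
      rw [hW, card_preimage_castHom hn hm''dvd, hnm'']
      simp
    have hG2sub : G2 ⊆ W := by
      rintro y ⟨k, rfl⟩
      simp only [hW, Set.mem_preimage, Set.mem_singleton_iff]
      rw [map_pow, map_pow, map_natCast, hqω1, one_pow]
    have hWG : W = G2 := by
      symm
      apply Set.eq_of_subset_of_ncard_le hG2sub ?_ (Set.toFinite _)
      have e1 : W.ncard = t := by rw [← Nat.card_coe_set_eq]; exact hWcard
      have e2 : G2.ncard = t := by rw [← Nat.card_coe_set_eq]; exact hG2card
      omega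
    have hWmem : ∀ v : ZMod n, ∃ k : ℕ, 1 + ((m'':ℕ):ZMod n) * v = (((q:ℕ):ZMod n)^ω)^k := by
      intro v
      have hmem : (1 + ((m'':ℕ):ZMod n) * v) ∈ W := by
        simp only [hW, Set.mem_preimage, Set.mem_singleton_iff]
        rw [map_add, map_one, map_mul, map_natCast, ZMod.natCast_self, zero_mul, add_zero]
      rw [hWG] at hmem
      exact hmem
    have hadd : ∀ (kw : ℤ) (x : ZMod n), x ∈ C →
        x + ((m'':ℕ):ZMod n) * ((kw : ℤ) : ZMod n) ∈ C := by
      intro kw x hxC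
      obtain ⟨i, rfl⟩ := hxC
      have hgu : IsUnit (γ * ((q:ℕ):ZMod n)^i) := hγ.mul (hqu.pow i)
      obtain ⟨k, hk⟩ := hWmem (((hgu.unit⁻¹ : (ZMod n)ˣ) : ZMod n) * ((kw:ℤ):ZMod n))
      refine ⟨i + ω*k, ?_⟩
      have hginv : (γ * ((q:ℕ):ZMod n)^i) * ((hgu.unit⁻¹ : (ZMod n)ˣ) : ZMod n) = 1 :=
        hgu.mul_val_inv
      calc γ * ((q:ℕ):ZMod n)^i + ((m'':ℕ):ZMod n) * ((kw:ℤ):ZMod n)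
          = (γ * ((q:ℕ):ZMod n)^i) * (1 + ((m'':ℕ):ZMod n) *
            (((hgu.unit⁻¹ : (ZMod n)ˣ) : ZMod n) * ((kw:ℤ):ZMod n))) := by
            rw [mul_add, mul_one]
            congr 1
            rw [show (γ * ((q:ℕ):ZMod n)^i) * (((m'':ℕ):ZMod n) *
              (((hgu.unit⁻¹ : (ZMod n)ˣ) : ZMod n) * ((kw:ℤ):ZMod n)))
              = ((γ * ((q:ℕ):ZMod n)^i) * ((hgu.unit⁻¹ : (ZMod n)ˣ) : ZMod n)) *
                (((m'':ℕ):ZMod n) * ((kw:ℤ):ZMod n)) by ring, hginv, one_mul]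
      _ = (γ * ((q:ℕ):ZMod n)^i) * ((((q:ℕ):ZMod n))^ω)^k := by rw [hk]
      _ = γ * ((q:ℕ):ZMod n)^(i + ω*k) := by rw [pow_add, pow_mul]; ring
    have hlow : (AddSubgroup.zmultiples (((m'':ℕ)) : ZMod n) : Set (ZMod n)) ⊆ S := by
      intro y hy
      obtain ⟨kz, hkz⟩ := AddSubgroup.mem_zmultiples_iff.mp hy
      have hyw : y = ((m'':ℕ):ZMod n) * ((kz : ℤ) : ZMod n) := by
        rw [← hkz, zsmul_eq_mul]; ring
      show (y + ·) '' C = C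
      apply Set.Subset.antisymm
      · rintro _ ⟨x, hxC, rfl⟩
        have h1 := hadd kz x hxC
        rw [← hyw] at h1
        show y + x ∈ C
        rw [show y + x = x + y by ring]
        exact h1
      · intro x hxC
        have hxy : x + -y ∈ C := by
          have := hadd (-kz) x hxC
          rw [show (((-kz : ℤ)):ZMod n) = -((kz:ℤ):ZMod n) by push_cast; ring] at this
          rw [show ((m'':ℕ):ZMod n) * -((kz:ℤ):ZMod n) = -(((m'':ℕ):ZMod n) * ((kz:ℤ):ZMod n)) by ring,
            ← hyw] at this
          exact this
        exact ⟨x + -y, hxy, by ring⟩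
    have hlowcard : Nat.card (AddSubgroup.zmultiples (((m'':ℕ)) : ZMod n)) = t := by
      rw [Nat.card_zmultiples, ZMod.addOrderOf_coe m'' hn.ne', Nat.gcd_comm,
        Nat.gcd_eq_left hm''dvd]
      exact hnm''
    calc t = (AddSubgroup.zmultiples (((m'':ℕ)) : ZMod n) : Set (ZMod n)).ncard := by
            rw [← Nat.card_coe_set_eq]; exact hlowcard.symm
    _ ≤ S.ncard := Set.ncard_le_ncard hlow (Set.toFinite _)
    _ = s := by rw [← Nat.card_coe_set_eq]
  -- upper bound: s ∣ t
  have hst : s ∣ t := by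
    have hωF : ω ∣ orderOf ((q:ℕ):ZMod m) := hωdvd_ord m hrm h4m
    obtain ⟨c, hc⟩ := hωF
    refine ⟨c, ?_⟩
    have h1 : ω * t = ω * (s * c) := by rw [← hτωt, hτsF, hc]; ring
    exact Nat.eq_of_mul_eq_mul_left hωpos h1
  exact le_antisymm (Nat.le_of_dvd htpos hst) hts
end

section
/- Let q be a prime power and n > 1 a positive integer coprime to q, with prime factorization n = p₁^{e₁}···p_s^{e_s}, and define ω = 2·ord_{rad(n)}(q) if q^{ord_{rad(n)}(q)} ≡ 3 (mod 4) and 8 ∣ n, and ω = ord_{rad(n)}(q) otherwise. Then ord_n(q) = ω (equivalently, the Singleton bound and the arithmetic Singleton bound of an irreducible constacyclic code whose generator polynomial has order n coincide) if and only if e_i ≤ v_{p_i}(q^{ω} − 1) for all 1 ≤ i ≤ s. -/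
/-!
Since `r = rad n` divides `n`, `ord_r q ∣ ord_n q`. When moreover `q ^ ord_r q ≡ -1 (mod 4)` and
`4 ∣ n`, the cofactor `ord_n q / ord_r q` must be even, because `q ^ ord_n q ≡ 1 (mod 4)`.
Hence `ω ∣ ord_n q` in all cases, and `ord_n q = ω` iff `ord_n q ∣ ω` iff `n ∣ q ^ ω - 1`, which is
the valuation condition prime by prime.
-/

theorem Nat.forall_mem_primeFactors_factorization_le_iff_dvd {a b : ℕ} (ha : a ≠ 0)
    (hb : b ≠ 0) :
    (∀ p ∈ a.primeFactors, a.factorization p ≤ b.factorization p) ↔ a ∣ b := by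
  rw [← Nat.factorization_prime_le_iff_dvd ha hb]
  refine forall_congr' fun p => ⟨fun h hp => ?_, fun h hp => h (Nat.prime_of_mem_primeFactors hp)⟩
  by_cases hpa : p ∣ a
  · exact h (Nat.mem_primeFactors.mpr ⟨hp, hpa, ha⟩)
  · simp [Nat.factorization_eq_zero_of_not_dvd hpa]

namespace ZMod

theorem orderOf_natCast_dvd_orderOf_natCast (q : ℕ) {m n : ℕ} (h : m ∣ n) :
    orderOf (q : ZMod m) ∣ orderOf (q : ZMod n) := by
  have := orderOf_map_dvd (ZMod.castHom h (ZMod m)).toMonoidHom (q : ZMod n)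
  rwa [RingHom.toMonoidHom_eq_coe, MonoidHom.coe_coe, map_natCast] at this

theorem orderOf_natCast_dvd_iff {q : ℕ} (hq : 0 < q) (m k : ℕ) :
    orderOf (q : ZMod m) ∣ k ↔ m ∣ q ^ k - 1 := by
  rw [orderOf_dvd_iff_pow_eq_one, ← ZMod.natCast_eq_zero_iff,
    Nat.cast_sub (Nat.one_le_pow _ _ hq), sub_eq_zero, Nat.cast_pow, Nat.cast_one]

theorem orderOf_natCast_pos {q m : ℕ} [NeZero m] (h : q.Coprime m) :
    0 < orderOf (q : ZMod m) :=
  ((ZMod.isUnit_iff_coprime q m).mpr h).isOfFinOrder.orderOf_pos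

end ZMod

theorem two_mul_dvd_of_pow_eq_neg_one {R : Type*} [Ring R] [Nontrivial R] (hR : ringChar R ≠ 2)
    {x : R} {d N : ℕ} (hd : x ^ d = -1) (hN : x ^ N = 1) (hdN : d ∣ N) : 2 * d ∣ N := by
  obtain ⟨t, rfl⟩ := hdN
  have ht : orderOf (-1 : R) ∣ t := by
    rw [orderOf_dvd_iff_pow_eq_one, ← hd, ← pow_mul, hN]
  rw [orderOf_neg_one, if_neg hR] at ht
  rw [mul_comm d t]
  exact mul_dvd_mul_right ht d

theorem dvd_orderOf_natCast_of_dvd (q : ℕ) {r n : ℕ} (hrn : r ∣ n) :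
    (if q ^ orderOf (q : ZMod r) % 4 = 3 ∧ 8 ∣ n
      then 2 * orderOf (q : ZMod r) else orderOf (q : ZMod r)) ∣ orderOf (q : ZMod n) := by
  have hdN := ZMod.orderOf_natCast_dvd_orderOf_natCast q hrn
  split_ifs with h
  · obtain ⟨h3, h8⟩ := h
    have : Fact (1 < 4) := ⟨by norm_num⟩
    have h4N := ZMod.orderOf_natCast_dvd_orderOf_natCast q ((by norm_num : 4 ∣ 8).trans h8)
    refine two_mul_dvd_of_pow_eq_neg_one (by rw [ZMod.ringChar_zmod_n]; norm_num)
      ?_ (orderOf_dvd_iff_pow_eq_one.mp h4N) hdN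
    rw [← Nat.cast_pow, ← ZMod.natCast_mod, h3]
    rfl
  · exact hdN

theorem singleton_bounds_coincide_iff_general (q n : ℕ) (hq : IsPrimePow q)
    (hco : Nat.Coprime n q)
    (r : ℕ) (hr : r = ∏ p ∈ n.primeFactors, p)
    (ω : ℕ) (hω : ω = if q ^ orderOf (q : ZMod r) % 4 = 3 ∧ 8 ∣ n
      then 2 * orderOf (q : ZMod r) else orderOf (q : ZMod r)) :
    orderOf (q : ZMod n) = ω ↔
      ∀ p ∈ n.primeFactors, n.factorization p ≤ (q ^ ω - 1).factorization p := by
  have hq2 : 2 ≤ q := hq.two_le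
  have hn : n ≠ 0 := by
    rintro rfl
    exact hq.ne_one (Nat.coprime_zero_left q |>.mp hco)
  have hrn : r ∣ n := hr ▸ Nat.prod_primeFactors_dvd n
  have : NeZero r := ⟨ne_zero_of_dvd_ne_zero hn hrn⟩
  have hd : 0 < orderOf (q : ZMod r) := ZMod.orderOf_natCast_pos (hco.coprime_dvd_left hrn).symm
  have hωpos : 0 < ω := by rw [hω]; split_ifs <;> omega
  have hωN : ω ∣ orderOf (q : ZMod n) := hω ▸ dvd_orderOf_natCast_of_dvd q hrn
  have hqω : q ^ ω - 1 ≠ 0 := Nat.sub_ne_zero_of_lt (Nat.one_lt_pow hωpos.ne' hq2)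
  rw [Nat.forall_mem_primeFactors_factorization_le_iff_dvd hn hqω,
    ← ZMod.orderOf_natCast_dvd_iff (by omega)]
  exact ⟨fun h => h ▸ dvd_rfl, fun h => Nat.dvd_antisymm h hωN⟩

/-- With `q` a prime power, `n > 1` coprime to `q`, and `ω` as usual,
`ord_n(q) = ω` (the Singleton and arithmetic Singleton bounds of an irreducible constacyclic
code whose generator polynomial has order `n` coincide) iff `v_p(n) ≤ v_p(q^ω - 1)` for
every prime `p` dividing `n`. -/
theorem singleton_bounds_coincide_iff (q n : ℕ) (hq : IsPrimePow q) (hn : 1 < n)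
    (hco : Nat.Coprime n q)
    (r : ℕ) (hr : r = ∏ p ∈ n.primeFactors, p)
    (ω : ℕ) (hω : ω = if q ^ orderOf (q : ZMod r) % 4 = 3 ∧ 8 ∣ n
      then 2 * orderOf (q : ZMod r) else orderOf (q : ZMod r)) :
    orderOf (q : ZMod n) = ω ↔
      ∀ p ∈ n.primeFactors, n.factorization p ≤ (q ^ ω - 1).factorization p :=
  singleton_bounds_coincide_iff_general q n hq hco r hr ω hω
end

section
/- Let F be a finite field of cardinality q, n a positive integer coprime to q, K a field extension of F containing a primitive n-th root of unity ζ, and γ ∈ ZMod n. Then the minimal polynomial of ζ^{γ̃} over F is a binomial (i.e., of the form X^k − c for some positive integer k and c ∈ F) if and only if the q-cyclotomic coset c_{n/q}(γ) is an equal-difference set, i.e., a coset of the additive subgroup of ZMod n generated by the image of some positive divisor d of n. -/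
/-!
Put `β = ζ ^ γ̃` and `s = γ * q - γ`. Because `ζ` is primitive, `a ↦ ζ ^ ã` is injective on
`ZMod n` and turns multiplication by `q` into the Frobenius `x ↦ x ^ q`; hence `|c_{n/q}(γ)|` is
the Frobenius period of `β`, which over a finite field is the degree `m` of its minimal polynomial.
That polynomial is a binomial iff `β ^ m ∈ F`, i.e. `(β ^ m) ^ q = β ^ m`, i.e. `m • s = 0`.
On the other side, `γ q ^ i - γ = (1 + q + ⋯ + q ^ (i - 1)) • s`, so `c_{n/q}(γ) ⊆ γ + ⟨s⟩`, while
any coset `γ₀ + H` containing both `γ` and `γ q` has `s ∈ H`. So `c_{n/q}(γ)` is an equal-difference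
set iff it fills `γ + ⟨s⟩`, iff the order of `s` divides `m`.
-/

open Polynomial Function

theorem Function.ncard_range_iterate_eq_minimalPeriod {α : Type*} {f : α → α} {x : α}
    (hx : x ∈ periodicPts f) : (Set.range fun n => f^[n] x).ncard = minimalPeriod f x := by
  have hrange : (Set.range fun n => f^[n] x) =
      (fun n => f^[n] x) '' Set.Iio (minimalPeriod f x) := by
    refine (Set.image_subset_range _ _).antisymm' ?_
    rintro _ ⟨n, rfl⟩
    exact ⟨n % minimalPeriod f x, Nat.mod_lt _ (minimalPeriod_pos_of_mem_periodicPts hx),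
      iterate_mod_minimalPeriod_eq⟩
  rw [hrange, iterate_injOn_Iio_minimalPeriod.ncard_image, Set.ncard_Iio_nat]

section MinpolyOverFiniteField

variable {F K : Type*} [Field F] [Field K] [Algebra F K] {x : K}

theorem minpoly.exists_eq_X_pow_sub_C_iff (hx : IsIntegral F x) :
    (∃ k : ℕ, 0 < k ∧ ∃ c : F, minpoly F x = X ^ k - C c) ↔
      x ^ (minpoly F x).natDegree ∈ (algebraMap F K).range := by
  constructor
  · rintro ⟨k, -, c, hmin⟩
    have hk : (minpoly F x).natDegree = k := by rw [hmin, natDegree_X_pow_sub_C]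
    have hroot : x ^ k - algebraMap F K c = 0 := by simpa [hmin] using minpoly.aeval F x
    exact ⟨c, by rw [hk, sub_eq_zero.mp hroot]⟩
  · rintro ⟨c, hc⟩
    have hpos := minpoly.natDegree_pos hx
    refine ⟨_, hpos, c, ?_⟩
    refine (eq_of_monic_of_dvd_of_natDegree_le (minpoly.monic hx)
      (monic_X_pow_sub_C c hpos.ne') (minpoly.dvd F x ?_) ?_).symm
    · simp [hc]
    · rw [natDegree_X_pow_sub_C]

variable [Finite F]

theorem minpoly.natDegree_dvd_iff_pow_card_pow_eq (hx : IsIntegral F x) (i : ℕ) :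
    (minpoly F x).natDegree ∣ i ↔ x ^ Nat.card F ^ i = x := by
  rw [(minpoly.irreducible hx).natDegree_dvd_iff_dvd_X_pow_card_pow_sub_X, minpoly.dvd_iff]
  simp [sub_eq_zero]

theorem FiniteField.minimalPeriod_pow_card_eq_natDegree_minpoly (hx : IsIntegral F x) :
    minimalPeriod (· ^ Nat.card F) x = (minpoly F x).natDegree := by
  refine Nat.dvd_right_iff_eq.mp fun i => ?_
  rw [← isPeriodicPt_iff_minimalPeriod_dvd, minpoly.natDegree_dvd_iff_pow_card_pow_eq hx,
    IsPeriodicPt, IsFixedPt, pow_iterate]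

theorem FiniteField.mem_range_algebraMap_iff (hx : IsIntegral F x) :
    x ∈ (algebraMap F K).range ↔ x ^ Nat.card F = x := by
  rw [← minpoly.natDegree_eq_one_iff, ← Nat.dvd_one,
    minpoly.natDegree_dvd_iff_pow_card_pow_eq hx, pow_one]

end MinpolyOverFiniteField

theorem IsPrimitiveRoot.pow_eq_pow_iff_natCast_eq {M : Type*} [CommMonoid M] {ζ : M} {n : ℕ}
    [NeZero n] (hζ : IsPrimitiveRoot ζ n) {a b : ℕ} :
    ζ ^ a = ζ ^ b ↔ (a : ZMod n) = b := by
  rw [(hζ.isOfFinOrder (NeZero.ne n)).pow_eq_pow_iff_modEq, ← hζ.eq_orderOf,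
    ZMod.natCast_eq_natCast_iff]

theorem IsPrimitiveRoot.pow_val_pow_eq_pow_iff {M : Type*} [CommMonoid M] {ζ : M} {n : ℕ}
    [NeZero n] (hζ : IsPrimitiveRoot ζ n) (γ : ZMod n) {a b : ℕ} :
    (ζ ^ γ.val) ^ a = (ζ ^ γ.val) ^ b ↔ γ * a = γ * b := by
  rw [← pow_mul, ← pow_mul, hζ.pow_eq_pow_iff_natCast_eq]
  push_cast
  rw [ZMod.natCast_zmod_val]

theorem ZMod.zmultiples_natCast_eq_zmultiples_gcd (n a : ℕ) :
    AddSubgroup.zmultiples (a : ZMod n) = AddSubgroup.zmultiples ((n.gcd a : ℕ) : ZMod n) := by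
  refine le_antisymm (AddSubgroup.zmultiples_le.mpr ?_) (AddSubgroup.zmultiples_le.mpr ?_)
  · obtain ⟨k, hk⟩ := Nat.gcd_dvd_right n a
    exact ⟨k, by dsimp only; rw [zsmul_eq_mul, Int.cast_natCast, ← Nat.cast_mul, mul_comm, ← hk]⟩
  · refine ⟨Nat.gcdB n a, ?_⟩
    dsimp only
    rw [zsmul_eq_mul, ← Int.cast_natCast (n.gcd a), Nat.gcd_eq_gcd_ab]
    push_cast
    rw [ZMod.natCast_self]
    ring

section Coset

variable {G : Type*} [AddCommGroup G]

theorem AddSubgroup.ncard_image_add_left (g : G) (H : AddSubgroup G) :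
    ((g + ·) '' (H : Set G)).ncard = Nat.card H := by
  rw [Set.ncard_image_of_injective _ (add_right_injective g), ← Nat.card_coe_set_eq]
  rfl

theorem addOrderOf_dvd_ncard_of_eq_coset {C : Set G} {g₀ g s : G} {H : AddSubgroup G}
    (hC : C = (g₀ + ·) '' (H : Set G)) (hg : g ∈ C) (hgs : g + s ∈ C) :
    addOrderOf s ∣ C.ncard := by
  rw [hC] at hg hgs
  obtain ⟨a, ha, rfl⟩ := hg
  obtain ⟨b, hb, hab⟩ := hgs
  dsimp only at hab
  rw [add_assoc] at hab
  have hs : s = b - a := eq_sub_of_add_eq' (add_left_cancel hab).symm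
  rw [hC, H.ncard_image_add_left, ← Nat.card_zmultiples]
  exact AddSubgroup.card_dvd_of_le (AddSubgroup.zmultiples_le.mpr (hs ▸ sub_mem hb ha))

theorem eq_coset_of_addOrderOf_dvd_ncard [Finite G] {C : Set G} {g s : G}
    (hC : C ⊆ (g + ·) '' (AddSubgroup.zmultiples s : Set G)) (hne : C.Nonempty)
    (hdvd : addOrderOf s ∣ C.ncard) :
    C = (g + ·) '' (AddSubgroup.zmultiples s : Set G) := by
  refine Set.eq_of_subset_of_ncard_le hC ?_ (Set.toFinite _)
  rw [AddSubgroup.ncard_image_add_left, Nat.card_zmultiples]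
  exact Nat.le_of_dvd (hne.ncard_pos (Set.toFinite _)) hdvd

end Coset

theorem mul_natCast_pow_sub_self_mem_zmultiples {R : Type*} [CommRing R] (a : R) (q i : ℕ) :
    a * (q : R) ^ i - a ∈ AddSubgroup.zmultiples (a * q - a) := by
  refine ⟨(∑ t ∈ Finset.range i, q ^ t : ℕ), ?_⟩
  dsimp only
  rw [natCast_zsmul, nsmul_eq_mul]
  push_cast
  linear_combination a * geom_sum_mul (q : R) i

def cyclotomicCoset (n q : ℕ) (γ : ZMod n) : Set (ZMod n) :=
  {x | ∃ i : ℕ, x = γ * (q : ZMod n) ^ i}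

section CyclotomicCoset

variable {n : ℕ} (q : ℕ) (γ : ZMod n)

theorem cyclotomicCoset_eq_range_iterate :
    cyclotomicCoset n q γ = Set.range fun i => (· * (q : ZMod n))^[i] γ := by
  ext x
  simp [cyclotomicCoset, eq_comm]

theorem cyclotomicCoset_subset_coset :
    cyclotomicCoset n q γ ⊆ (γ + ·) '' (AddSubgroup.zmultiples (γ * q - γ) : Set (ZMod n)) := by
  rintro _ ⟨i, rfl⟩
  exact ⟨_, mul_natCast_pow_sub_self_mem_zmultiples γ q i, add_sub_cancel γ _⟩

theorem self_mem_cyclotomicCoset : γ ∈ cyclotomicCoset n q γ := ⟨0, by simp⟩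

theorem add_mul_sub_self_mem_cyclotomicCoset : γ + (γ * q - γ) ∈ cyclotomicCoset n q γ :=
  ⟨1, by simp⟩

end CyclotomicCoset

section PrimitiveRoot

variable {F K : Type*} [Field F] [Finite F] [Field K] [Algebra F K] {n : ℕ} [NeZero n] {ζ : K}
  (hζ : IsPrimitiveRoot ζ n) (γ : ZMod n)
include hζ

theorem IsPrimitiveRoot.ncard_cyclotomicCoset_eq_natDegree_minpoly :
    (cyclotomicCoset n (Nat.card F) γ).ncard = (minpoly F (ζ ^ γ.val)).natDegree := by
  have hβ : IsIntegral F (ζ ^ γ.val) := (hζ.isIntegral (NeZero.pos n)).tower_top.pow _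
  have hperiod : minimalPeriod (· * (Nat.card F : ZMod n)) γ =
      minimalPeriod (· ^ Nat.card F) (ζ ^ γ.val) :=
    minimalPeriod_eq_minimalPeriod_iff.mpr fun i => by
      simpa [IsPeriodicPt, IsFixedPt, pow_iterate, eq_comm] using
        (hζ.pow_val_pow_eq_pow_iff γ (a := Nat.card F ^ i) (b := 1)).symm
  rw [← FiniteField.minimalPeriod_pow_card_eq_natDegree_minpoly hβ, ← hperiod]
  refine cyclotomicCoset_eq_range_iterate _ γ ▸ ncard_range_iterate_eq_minimalPeriod ?_
  rw [← minimalPeriod_pos_iff_mem_periodicPts, hperiod,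
    FiniteField.minimalPeriod_pow_card_eq_natDegree_minpoly hβ]
  exact minpoly.natDegree_pos hβ

theorem IsPrimitiveRoot.exists_minpoly_eq_X_pow_sub_C_iff :
    (∃ k : ℕ, 0 < k ∧ ∃ c : F, minpoly F (ζ ^ γ.val) = X ^ k - C c) ↔
      addOrderOf (γ * (Nat.card F : ZMod n) - γ) ∣ (cyclotomicCoset n (Nat.card F) γ).ncard := by
  have hβ : IsIntegral F (ζ ^ γ.val) := (hζ.isIntegral (NeZero.pos n)).tower_top.pow _
  rw [minpoly.exists_eq_X_pow_sub_C_iff hβ, FiniteField.mem_range_algebraMap_iff (hβ.pow _),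
    hζ.ncard_cyclotomicCoset_eq_natDegree_minpoly, ← pow_mul, hζ.pow_val_pow_eq_pow_iff,
    addOrderOf_dvd_iff_nsmul_eq_zero, nsmul_eq_mul]
  push_cast
  constructor <;> intro h <;> linear_combination h

end PrimitiveRoot

theorem minpoly_binomial_iff_equal_difference_coset_general {F K : Type*} [Field F] [Fintype F]
    [Field K] [Algebra F K] (q : ℕ) (hq : Fintype.card F = q)
    (n : ℕ) (hn : 0 < n)
    (ζ : K) (hζ : IsPrimitiveRoot ζ n) (γ : ZMod n) :
    (∃ k : ℕ, 0 < k ∧ ∃ c : F, minpoly F (ζ ^ γ.val) = X ^ k - C c) ↔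
    (∃ d : ℕ, 0 < d ∧ d ∣ n ∧ ∃ γ₀ : ZMod n,
      {x : ZMod n | ∃ i : ℕ, x = γ * (q : ZMod n) ^ i} =
        (γ₀ + ·) '' ((AddSubgroup.closure {((d : ZMod n))} :
          AddSubgroup (ZMod n)) : Set (ZMod n))) := by
  have : NeZero n := ⟨hn.ne'⟩
  rw [← Nat.card_eq_fintype_card] at hq
  subst hq
  rw [hζ.exists_minpoly_eq_X_pow_sub_C_iff]
  constructor
  · intro hdvd
    set s := γ * (Nat.card F : ZMod n) - γ
    refine ⟨n.gcd s.val, Nat.gcd_pos_of_pos_left _ hn, Nat.gcd_dvd_left _ _, γ, ?_⟩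
    rw [← AddSubgroup.zmultiples_eq_closure, ← ZMod.zmultiples_natCast_eq_zmultiples_gcd,
      ZMod.natCast_zmod_val]
    exact eq_coset_of_addOrderOf_dvd_ncard (cyclotomicCoset_subset_coset _ γ)
      ⟨γ, self_mem_cyclotomicCoset _ γ⟩ hdvd
  · rintro ⟨d, -, -, γ₀, hC⟩
    exact addOrderOf_dvd_ncard_of_eq_coset hC (self_mem_cyclotomicCoset _ γ)
      (add_mul_sub_self_mem_cyclotomicCoset _ γ)

/-- Let `F` be a finite field of cardinality `q`, `n` coprime to `q`, `K ⊇ F`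
containing a primitive `n`-th root of unity `ζ`, and `γ ∈ ZMod n`. Then the minimal polynomial
of `ζ^γ̃` over `F` is a binomial `X^k - c` (with `k > 0`, `c ∈ F`) iff the `q`-cyclotomic coset
`c_{n/q}(γ)` is an equal-difference set, i.e. a coset of the additive subgroup of `ZMod n`
generated by the image of some positive divisor `d` of `n`. -/
theorem minpoly_binomial_iff_equal_difference_coset {F K : Type*} [Field F] [Fintype F]
    [Field K] [Algebra F K] (q : ℕ) (hq : Fintype.card F = q)
    (n : ℕ) (hn : 0 < n) (hco : Nat.Coprime n q)
    (ζ : K) (hζ : IsPrimitiveRoot ζ n) (γ : ZMod n) :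
    (∃ k : ℕ, 0 < k ∧ ∃ c : F, minpoly F (ζ ^ γ.val) = X ^ k - C c) ↔
    (∃ d : ℕ, 0 < d ∧ d ∣ n ∧ ∃ γ₀ : ZMod n,
      {x : ZMod n | ∃ i : ℕ, x = γ * (q : ZMod n) ^ i} =
        (γ₀ + ·) '' ((AddSubgroup.closure {((d : ZMod n))} :
          AddSubgroup (ZMod n)) : Set (ZMod n))) :=
  minpoly_binomial_iff_equal_difference_coset_general q hq n hn ζ hζ γ
end
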